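/- arXiv:math/0511390 — 6 statements merged into one kernel-verified Lean document; each statement's English description precedes it below -/
import Mathlib

section
/- Let (a_i)_{i≥1} be any sequence of integers and let f = 1 + Σ_{i≥1} a_i X^i ∈ ℤ⟦X⟧. Then there exists a unique sequence of integers (b_i)_{i≥1} such that f = Π_{i≥1} (1 − X^i)^{b_i}, where the infinite product is understood coefficientwise: for every n ≥ 1, the coefficient of X^n in the finite product Π_{i=1}^{n} (1 − X^i)^{b_i} equals a_n. -/
/-- Integer power of an element of a monoid with zero: for units this agrees with
the `zpow` in the unit group; negative exponents use `Ring.inverse`. -/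
noncomputable def ringZpow {R : Type*} [MonoidWithZero R] (f : R) (n : ℤ) : R :=
  if 0 ≤ n then f ^ n.toNat else Ring.inverse f ^ (-n).toNat

/-!
Modulo `X^(n+1)` one has `(X^n)^2 ≡ 0`, hence `(1 - X^n)^m ≡ 1 - m X^n` for every `m : ℤ`.
Multiplying a series with constant term `1` by `(1 - X^n)^m` therefore lowers its coefficient
of `X^n` by `m`, so the condition at `n` reads `b n = coeff n (∏_{i<n} (1 - X^i)^{b i}) - a n`:
a recursion that determines the `b n` one at a time.
-/

open PowerSeries Finset

lemma ringZpow_unit {M : Type*} [MonoidWithZero M] (u : Mˣ) (m : ℤ) :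
    ringZpow (u : M) m = ((u ^ m : Mˣ) : M) := by
  unfold ringZpow
  split_ifs with hm
  · lift m to ℕ using hm
    simp
  · obtain ⟨k, rfl⟩ : ∃ k : ℕ, m = -k := ⟨(-m).toNat, by omega⟩
    simp

lemma dvd_units_zpow_sub_of_dvd_sq {R : Type*} [CommRing R] {d e : R} (hd : d ∣ e ^ 2)
    (u : Rˣ) (hu : (u : R) = 1 - e) (m : ℤ) :
    d ∣ ((u ^ m : Rˣ) : R) - (1 - m * e) := by
  obtain ⟨q, hq⟩ := hd
  have hinv : ((u⁻¹ : Rˣ) : R) = 1 + e + ((u⁻¹ : Rˣ) : R) * e ^ 2 := by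
    linear_combination (1 + e) * u.inv_mul - (1 + e) * ((u⁻¹ : Rˣ) : R) * hu
  induction m using Int.induction_on with
  | zero => simp
  | succ k ih =>
    obtain ⟨c, hc⟩ := ih
    refine ⟨c * u + k * q, ?_⟩
    rw [zpow_add_one, Units.val_mul]
    push_cast at hc ⊢
    linear_combination (u : R) * hc + (1 - k * e) * hu + k * hq
  | pred k ih =>
    obtain ⟨c, hc⟩ := ih
    refine ⟨c * (u⁻¹ : Rˣ) + (1 + k * e) * (u⁻¹ : Rˣ) * q + k * q, ?_⟩
    rw [zpow_sub_one, Units.val_mul]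
    push_cast at hc ⊢
    linear_combination ((u⁻¹ : Rˣ) : R) * hc + (1 + k * e) * hinv
      + (1 + k * e) * ((u⁻¹ : Rˣ) : R) * hq + k * hq

section PowerSeries

variable {R : Type*} [CommRing R]

lemma X_pow_succ_dvd_ringZpow_one_sub_X_pow_sub {n : ℕ} (hn : n ≠ 0) (m : ℤ) :
    (X : R⟦X⟧) ^ (n + 1) ∣ ringZpow (1 - (X : R⟦X⟧) ^ n) m - (1 - (m : R⟦X⟧) * X ^ n) := by
  have hunit : IsUnit (1 - (X : R⟦X⟧) ^ n) := by
    simp [isUnit_iff_constantCoeff, zero_pow hn]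
  rw [← hunit.unit_spec, ringZpow_unit]
  refine dvd_units_zpow_sub_of_dvd_sq ?_ _ hunit.unit_spec m
  rw [← pow_mul]
  exact pow_dvd_pow X (by omega)

lemma constantCoeff_ringZpow_one_sub_X_pow {n : ℕ} (hn : n ≠ 0) (m : ℤ) :
    constantCoeff (ringZpow (1 - (X : R⟦X⟧) ^ n) m) = 1 := by
  have h := X_pow_dvd_iff.1 (X_pow_succ_dvd_ringZpow_one_sub_X_pow_sub (R := R) hn m) 0
    n.succ_pos
  simpa [zero_pow hn, sub_eq_zero] using h

lemma coeff_mul_ringZpow_one_sub_X_pow {n : ℕ} (hn : n ≠ 0) (f : R⟦X⟧) (m : ℤ) :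
    coeff n (f * ringZpow (1 - X ^ n) m) = coeff n f - m * constantCoeff f := by
  obtain ⟨r, hr⟩ := X_pow_succ_dvd_ringZpow_one_sub_X_pow_sub (R := R) hn m
  rw [sub_eq_iff_eq_add'.1 hr]
  have hhigh : coeff n (f * (X ^ (n + 1) * r)) = 0 :=
    X_pow_dvd_iff.1 (dvd_mul_of_dvd_right (dvd_mul_right _ _) f) n n.lt_succ_self
  have hshift : coeff n (f * X ^ n) = constantCoeff f := by
    simpa using coeff_mul_X_pow f n 0
  simp only [mul_add, mul_sub, mul_one, map_add, map_sub, hhigh, add_zero]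
  rw [mul_left_comm, ← map_intCast (C (R := R)), coeff_C_mul, hshift]

variable (R) in
noncomputable def eulerPartialProd (b : ℕ → ℤ) (n : ℕ) : R⟦X⟧ :=
  ∏ i ∈ Icc 1 n, ringZpow (1 - (X : R⟦X⟧) ^ i) (b i)

lemma constantCoeff_eulerPartialProd (b : ℕ → ℤ) (n : ℕ) :
    constantCoeff (eulerPartialProd R b n) = 1 := by
  rw [eulerPartialProd, map_prod]
  refine prod_eq_one fun i hi => constantCoeff_ringZpow_one_sub_X_pow ?_ (b i)
  simp only [mem_Icc] at hi
  omega

lemma coeff_eulerPartialProd_self (b : ℕ → ℤ) {n : ℕ} (hn : n ≠ 0) :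
    coeff n (eulerPartialProd R b n) = coeff n (eulerPartialProd R b (n - 1)) - b n := by
  obtain ⟨k, rfl⟩ := Nat.exists_eq_succ_of_ne_zero hn
  rw [eulerPartialProd, prod_Icc_succ_top k.succ_pos, ← eulerPartialProd,
    coeff_mul_ringZpow_one_sub_X_pow hn, constantCoeff_eulerPartialProd, mul_one]
  rfl

lemma eulerPartialProd_congr {b b' : ℕ → ℤ} {n : ℕ} (h : ∀ i ∈ Icc 1 n, b i = b' i) :
    eulerPartialProd R b n = eulerPartialProd R b' n :=
  prod_congr rfl fun i hi => by rw [h i hi]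

end PowerSeries

lemma coeff_eulerPartialProd_self_eq_iff (a b : ℕ → ℤ) {n : ℕ} (hn : n ≠ 0) :
    coeff n (eulerPartialProd ℤ b n) = a n ↔
      b n = coeff n (eulerPartialProd ℤ b (n - 1)) - a n := by
  rw [coeff_eulerPartialProd_self b hn, Int.cast_id]
  omega

noncomputable def eulerExponents (a : ℕ → ℤ) (n : ℕ) : ℤ :=
  coeff n (∏ i ∈ (Icc 1 (n - 1)).attach,
    ringZpow (1 - (X : ℤ⟦X⟧) ^ (i : ℕ)) (eulerExponents a i)) - a n
termination_by n
decreasing_by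
  have := i.2
  simp only [mem_Icc] at this
  omega

lemma eulerExponents_eq (a : ℕ → ℤ) (n : ℕ) :
    eulerExponents a n = coeff n (eulerPartialProd ℤ (eulerExponents a) (n - 1)) - a n := by
  rw [eulerExponents, prod_attach (Icc 1 (n - 1))
    (fun i => ringZpow (1 - (X : ℤ⟦X⟧) ^ i) (eulerExponents a i)), eulerPartialProd]

/-- Lemma 2.1 (Transform1, existence and uniqueness part): given any integer sequence
`(a_i)_{i ≥ 1}`, there is a unique integer sequence `(b_i)_{i ≥ 1}` such that, for every
`n ≥ 1`, the coefficient of `X^n` in `∏_{i=1}^{n} (1 - X^i)^{b_i}` equals `a_n`; i.e.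
`1 + Σ a_i X^i = ∏_{i ≥ 1} (1 - X^i)^{b_i}` coefficientwise. -/
theorem statement0 (a : ℕ → ℤ) :
    ∃ b : ℕ → ℤ,
      (∀ n : ℕ, 1 ≤ n →
        (PowerSeries.coeff (R := ℤ) n)
          (∏ i ∈ Finset.Icc 1 n,
            ringZpow (1 - (PowerSeries.X : PowerSeries ℤ) ^ i) (b i)) = a n) ∧
      (∀ b' : ℕ → ℤ,
        (∀ n : ℕ, 1 ≤ n →
          (PowerSeries.coeff (R := ℤ) n)
            (∏ i ∈ Finset.Icc 1 n,
              ringZpow (1 - (PowerSeries.X : PowerSeries ℤ) ^ i) (b' i)) = a n) →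
        ∀ i : ℕ, 1 ≤ i → b' i = b i) := by
  refine ⟨eulerExponents a, fun n hn => ?_, fun b' hb' i => ?_⟩
  · exact (coeff_eulerPartialProd_self_eq_iff a _ (by omega)).2 (eulerExponents_eq a n)
  induction i using Nat.strong_induction_on with
  | _ i ih =>
    intro hi
    have hagree : eulerPartialProd ℤ b' (i - 1) = eulerPartialProd ℤ (eulerExponents a) (i - 1) :=
      eulerPartialProd_congr fun j hj => by
        simp only [mem_Icc] at hj
        exact ih j (by omega) hj.1
    rw [(coeff_eulerPartialProd_self_eq_iff a b' (by omega)).1 (hb' i hi), hagree,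
      ← eulerExponents_eq]
end

section
/- Let (a_i)_{i≥1} be a sequence of even integers and let f = 1 + Σ_{i≥1} a_i X^i ∈ ℤ⟦X⟧. Then there exists a unique sequence of integers (b_i)_{i≥1} such that f = Π_{i≥1} ((1 − X^i)·(1 + X^i)^{-1})^{b_i}, coefficientwise: for every n ≥ 1, the coefficient of X^n in the finite product Π_{i=1}^{n} ((1 − X^i)·(1 + X^i)^{-1})^{b_i} equals a_n. Conversely, for any sequence of integers (b_i)_{i≥1}, every positive-degree coefficient of the (coefficientwise) infinite product Π_{i≥1} ((1 − X^i)·(1 + X^i)^{-1})^{b_i} is an even integer. -/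
/-- The factor `(1 - X^i) · (1 + X^i)⁻¹` in `ℤ⟦X⟧`. -/
noncomputable def minusOverPlus (i : ℕ) : PowerSeries ℤ :=
  (1 - PowerSeries.X ^ i) * Ring.inverse (1 + PowerSeries.X ^ i)

open PowerSeries Finset

section UnitsModEqOne

variable {R : Type*} [CommRing R]

theorem dvd_mul_sub_one {a f g : R} (hf : a ∣ f - 1) (hg : a ∣ g - 1) : a ∣ f * g - 1 := by
  have : f * g - 1 = f * (g - 1) + (f - 1) := by ring
  rw [this]
  exact dvd_add (dvd_mul_of_dvd_right hg f) hf

theorem dvd_prod_sub_one {ι : Type*} {a : R} {s : Finset ι} {f : ι → R}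
    (h : ∀ i ∈ s, a ∣ f i - 1) : a ∣ ∏ i ∈ s, f i - 1 :=
  Finset.prod_induction f (fun x ↦ a ∣ x - 1) (fun _ _ ↦ dvd_mul_sub_one)
    (by simp) h

def unitsModEqOne (a : R) : Subgroup Rˣ where
  carrier := {u | a ∣ (u : R) - 1}
  mul_mem' := dvd_mul_sub_one
  one_mem' := by simp
  inv_mem' {u} hu := by
    have : ((u⁻¹ : Rˣ) : R) - 1 = -(↑u⁻¹ * (↑u - 1)) := by
      rw [mul_sub, Units.inv_mul]; ring
    change a ∣ ((u⁻¹ : Rˣ) : R) - 1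
    rw [this, dvd_neg]
    exact dvd_mul_of_dvd_right hu _

theorem mem_unitsModEqOne {a : R} {u : Rˣ} : u ∈ unitsModEqOne a ↔ a ∣ (u : R) - 1 :=
  Iff.rfl

end UnitsModEqOne

theorem ringZpow_units {M : Type*} [MonoidWithZero M] (u : Mˣ) (m : ℤ) :
    ringZpow (u : M) m = ↑(u ^ m) := by
  unfold ringZpow
  split_ifs with hm
  · rw [← Int.toNat_of_nonneg hm, zpow_natCast, Units.val_pow_eq_pow_val, Int.toNat_natCast]
  · obtain ⟨k, rfl⟩ : ∃ k : ℕ, m = -k := ⟨(-m).toNat, by omega⟩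
    rw [neg_neg, Int.toNat_natCast, zpow_neg, zpow_natCast, Ring.inverse_unit, ← inv_pow,
      Units.val_pow_eq_pow_val]

theorem IsUnit.dvd_ringZpow_sub_one {R : Type*} [CommRing R] {a f : R} (hf : IsUnit f)
    (h : a ∣ f - 1) (m : ℤ) : a ∣ ringZpow f m - 1 := by
  rw [← hf.unit_spec, ringZpow_units]
  exact mem_unitsModEqOne.mp (zpow_mem (mem_unitsModEqOne.mpr (by rwa [hf.unit_spec])) m)

namespace PowerSeries

variable {R : Type*} [CommRing R]

theorem constantCoeff_eq_one_of_X_pow_dvd_sub_one {n : ℕ} (hn : n ≠ 0) {f : R⟦X⟧}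
    (h : X ^ n ∣ f - 1) : constantCoeff f = 1 := by
  have := X_dvd_iff.mp ((dvd_pow_self X hn).trans h)
  rwa [map_sub, map_one, sub_eq_zero] at this

theorem coeff_mul_of_X_pow_dvd_sub_one {n : ℕ} (hn : n ≠ 0) {f g : R⟦X⟧}
    (hf : constantCoeff f = 1) (hg : X ^ n ∣ g - 1) :
    coeff n (f * g) = coeff n f + coeff n g := by
  obtain ⟨h, hh⟩ := hg
  have hfg : f * g = f + X ^ n * (f * h) := by linear_combination f * hh
  have hg' : g = 1 + X ^ n * h := by linear_combination hh
  have hcoeff : ∀ p : R⟦X⟧, coeff n (X ^ n * p) = constantCoeff p := fun p ↦ by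
    simpa using coeff_X_pow_mul p n 0
  rw [hfg, hg', map_add, map_add, hcoeff, hcoeff, map_mul, hf, one_mul, coeff_one, if_neg hn,
    zero_add]

noncomputable def coeffUnitsHom {n : ℕ} (hn : n ≠ 0) :
    unitsModEqOne (X ^ n : R⟦X⟧) →* Multiplicative R where
  toFun u := .ofAdd (coeff n (u : R⟦X⟧ˣ))
  map_one' := by simp [coeff_one, hn]
  map_mul' u v := by
    simp only [Subgroup.coe_mul, Units.val_mul]
    rw [coeff_mul_of_X_pow_dvd_sub_one hn (constantCoeff_eq_one_of_X_pow_dvd_sub_one hn u.2) v.2,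
      ofAdd_add]

theorem coeff_ringZpow {n : ℕ} (hn : n ≠ 0) {f : R⟦X⟧} (hf : IsUnit f) (h : X ^ n ∣ f - 1)
    (m : ℤ) : coeff n (ringZpow f m) = m * coeff n f := by
  have hmem : hf.unit ∈ unitsModEqOne (X ^ n : R⟦X⟧) := by
    rw [mem_unitsModEqOne, hf.unit_spec]; exact h
  have := congrArg Multiplicative.toAdd (map_zpow (coeffUnitsHom (R := R) hn) ⟨hf.unit, hmem⟩ m)
  rw [← hf.unit_spec, ringZpow_units]
  simpa [coeffUnitsHom] using this

theorem isUnit_one_add_X_pow {i : ℕ} (hi : i ≠ 0) : IsUnit (1 + X ^ i : R⟦X⟧) := by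
  simp [isUnit_iff_constantCoeff, hi]

end PowerSeries

theorem minusOverPlus_sub_one {i : ℕ} (hi : i ≠ 0) :
    minusOverPlus i - 1 = X ^ i * (-2 * Ring.inverse (1 + X ^ i)) := by
  have hinv := Ring.mul_inverse_cancel _ (isUnit_one_add_X_pow (R := ℤ) hi)
  rw [minusOverPlus]
  linear_combination hinv

theorem X_pow_dvd_minusOverPlus_sub_one {i : ℕ} (hi : i ≠ 0) :
    X ^ i ∣ minusOverPlus i - 1 :=
  minusOverPlus_sub_one hi ▸ dvd_mul_right _ _

theorem two_dvd_minusOverPlus_sub_one {i : ℕ} (hi : i ≠ 0) :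
    2 ∣ minusOverPlus i - 1 :=
  ⟨-(X ^ i * Ring.inverse (1 + X ^ i)), by rw [minusOverPlus_sub_one hi]; ring⟩

theorem isUnit_minusOverPlus {i : ℕ} (hi : i ≠ 0) : IsUnit (minusOverPlus i) :=
  isUnit_iff_constantCoeff.mpr <|
    (constantCoeff_eq_one_of_X_pow_dvd_sub_one hi (X_pow_dvd_minusOverPlus_sub_one hi)) ▸ isUnit_one

theorem coeff_minusOverPlus_self {i : ℕ} (hi : i ≠ 0) : coeff i (minusOverPlus i) = -2 := by
  have hinv := congrArg constantCoeff
    (Ring.mul_inverse_cancel _ (isUnit_one_add_X_pow (R := ℤ) hi))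
  simp only [map_mul, map_add, map_one, map_pow, constantCoeff_X, zero_pow hi, add_zero,
    one_mul] at hinv
  have := congrArg (coeff i) (minusOverPlus_sub_one hi)
  simpa [coeff_one, hi, coeff_X_pow_mul', hinv, map_ofNat] using this

noncomputable def partialProd (b : ℕ → ℤ) (n : ℕ) : ℤ⟦X⟧ :=
  ∏ i ∈ Icc 1 n, ringZpow (minusOverPlus i) (b i)

theorem dvd_partialProd_sub_one {d : ℤ⟦X⟧} (h : ∀ i, i ≠ 0 → d ∣ minusOverPlus i - 1)
    (b : ℕ → ℤ) (n : ℕ) : d ∣ partialProd b n - 1 :=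
  dvd_prod_sub_one fun i hi ↦
    have hi : i ≠ 0 := by have := (mem_Icc.mp hi).1; omega
    (isUnit_minusOverPlus hi).dvd_ringZpow_sub_one (h i hi) (b i)

theorem constantCoeff_partialProd (b : ℕ → ℤ) (n : ℕ) : constantCoeff (partialProd b n) = 1 :=
  constantCoeff_eq_one_of_X_pow_dvd_sub_one one_ne_zero <| dvd_partialProd_sub_one
    (fun _ hi ↦ (pow_dvd_pow X (Nat.one_le_iff_ne_zero.mpr hi)).trans
      (X_pow_dvd_minusOverPlus_sub_one hi)) b n

theorem even_coeff_partialProd (b : ℕ → ℤ) {n : ℕ} (hn : n ≠ 0) (m : ℕ) :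
    Even (coeff n (partialProd b m)) := by
  obtain ⟨q, hq⟩ := dvd_partialProd_sub_one (fun _ ↦ two_dvd_minusOverPlus_sub_one) b m
  have := congrArg (coeff n) hq
  rw [map_sub, coeff_one, if_neg hn, sub_zero, ← map_ofNat C, coeff_C_mul] at this
  exact even_iff_two_dvd.mpr ⟨_, this⟩

theorem coeff_partialProd_self (b : ℕ → ℤ) {n : ℕ} (hn : n ≠ 0) :
    coeff n (partialProd b n) = coeff n (partialProd b (n - 1)) - 2 * b n := by
  obtain ⟨k, rfl⟩ : ∃ k, n = k + 1 := ⟨n - 1, by omega⟩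
  have hunit := isUnit_minusOverPlus hn
  rw [partialProd, prod_Icc_succ_top (by omega), ← partialProd,
    coeff_mul_of_X_pow_dvd_sub_one hn (constantCoeff_partialProd b k)
      (hunit.dvd_ringZpow_sub_one (X_pow_dvd_minusOverPlus_sub_one hn) _),
    coeff_ringZpow hn hunit (X_pow_dvd_minusOverPlus_sub_one hn), coeff_minusOverPlus_self hn,
    Nat.add_sub_cancel, Int.cast_id]
  ring

/-- `b_n = (c_n - a_n) / 2`, where `c_n` is the coefficient of `X^n` in the `(n-1)`-th partial
product; the product is written over `attach` so that the recursion is visibly well-founded. -/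
noncomputable def solveExponents (a : ℕ → ℤ) (n : ℕ) : ℤ :=
  (coeff n (∏ i ∈ (Icc 1 (n - 1)).attach,
    ringZpow (minusOverPlus i) (solveExponents a i)) - a n) / 2
termination_by n
decreasing_by have := mem_Icc.mp i.2; omega

theorem solveExponents_eq (a : ℕ → ℤ) (n : ℕ) :
    solveExponents a n = (coeff n (partialProd (solveExponents a) (n - 1)) - a n) / 2 := by
  rw [solveExponents, prod_attach _ fun i ↦ ringZpow (minusOverPlus i) (solveExponents a i)]
  rfl

theorem coeff_partialProd_solveExponents {a : ℕ → ℤ} {n : ℕ} (hn : n ≠ 0) (ha : Even (a n)) :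
    coeff n (partialProd (solveExponents a) n) = a n := by
  obtain ⟨c, hc⟩ := even_coeff_partialProd (solveExponents a) hn (n - 1)
  obtain ⟨r, hr⟩ := ha
  rw [coeff_partialProd_self _ hn, solveExponents_eq]
  omega

theorem eq_of_coeff_partialProd_eq {b b' : ℕ → ℤ}
    (h : ∀ n, n ≠ 0 → coeff n (partialProd b n) = coeff n (partialProd b' n)) :
    ∀ n, n ≠ 0 → b n = b' n := by
  intro n
  induction n using Nat.strong_induction_on with
  | _ n ih =>
    intro hn
    have hprev : partialProd b (n - 1) = partialProd b' (n - 1) :=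
      prod_congr rfl fun i hi ↦ by
        have := mem_Icc.mp hi
        rw [ih i (by omega) (by omega)]
    have := h n hn
    rw [coeff_partialProd_self b hn, coeff_partialProd_self b' hn, hprev] at this
    omega

/-- Lemma 2.2 (Transform2): if `(a_i)_{i ≥ 1}` is a sequence of even integers, then there is a
unique integer sequence `(b_i)_{i ≥ 1}` with
`1 + Σ a_i X^i = ∏_{i ≥ 1} ((1 - X^i)(1 + X^i)⁻¹)^{b_i}` coefficientwise, i.e. for every
`n ≥ 1` the coefficient of `X^n` in `∏_{i=1}^{n} ((1 - X^i)(1 + X^i)⁻¹)^{b_i}` equals `a_n`.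
Conversely, for any integer sequence `(b_i)` every positive-degree coefficient of the
coefficientwise infinite product is even. -/
theorem statement1 (a : ℕ → ℤ) (ha : ∀ i : ℕ, 1 ≤ i → Even (a i)) :
    (∃ b : ℕ → ℤ,
      (∀ n : ℕ, 1 ≤ n →
        (PowerSeries.coeff (R := ℤ) n)
          (∏ i ∈ Finset.Icc 1 n, ringZpow (minusOverPlus i) (b i)) = a n) ∧
      (∀ b' : ℕ → ℤ,
        (∀ n : ℕ, 1 ≤ n →
          (PowerSeries.coeff (R := ℤ) n)
            (∏ i ∈ Finset.Icc 1 n, ringZpow (minusOverPlus i) (b' i)) = a n) →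
        ∀ i : ℕ, 1 ≤ i → b' i = b i)) ∧
    (∀ b : ℕ → ℤ, ∀ n : ℕ, 1 ≤ n →
      Even ((PowerSeries.coeff (R := ℤ) n)
        (∏ i ∈ Finset.Icc 1 n, ringZpow (minusOverPlus i) (b i)))) := by
  have hsolve : ∀ n, n ≠ 0 → coeff n (partialProd (solveExponents a) n) = a n :=
    fun n hn ↦ coeff_partialProd_solveExponents hn (ha n (by omega))
  refine ⟨⟨solveExponents a, fun n hn ↦ hsolve n (by omega), fun b' hb' i hi ↦ ?_⟩,
    fun b n hn ↦ even_coeff_partialProd b (by omega) n⟩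
  exact eq_of_coeff_partialProd_eq
    (fun n hn ↦ (hb' n (by omega)).trans (hsolve n hn).symm) i (by omega)
end

section
/- Let q ≥ 2 be an integer and let x be a real number with |x| < 1/q. Then the family d ↦ (1 − x^d)^{N(d,q)} (d ≥ 1, real-power exponentiation with positive base) is multipliable, and Π_{d≥1} (1 − x^d)^{N(d,q)} = (1 − qx)/(1 − x). -/
/-!
Taking logarithms, `∑_d N(d) log (1 - x^d) = -∑_{d,k ≥ 1} N(d) x^{dk} / k`. This double series
converges absolutely because `|N(d)| ≤ q^d` and `q |x| < 1`. Grouping its terms by `n = dk` and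
using `∑_{d ∣ n} d N(d) = q^n - 1` (Möbius inversion of the definition of `N`) turns it into
`-∑_n (q^n - 1) x^n / n = log (1 - q x) - log (1 - x)`.
-/

/-- `N(d,q) = (1/d) Σ_{a ∣ d} μ(a) (q^{d/a} - 1)`. -/
noncomputable def Nfun (d q : ℕ) : ℚ :=
  (1 / (d : ℚ)) *
    ∑ a ∈ d.divisors, ((ArithmeticFunction.moebius a : ℤ) : ℚ) * ((q : ℚ) ^ (d / a) - 1)

open ArithmeticFunction Real Finset

theorem sum_divisors_mul_Nfun (q : ℕ) {n : ℕ} (hn : 0 < n) :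
    ∑ d ∈ n.divisors, (d : ℚ) * Nfun d q = (q : ℚ) ^ n - 1 := by
  revert n
  rw [sum_eq_iff_sum_smul_moebius_eq]
  intro n hn
  rw [Nat.sum_divisorsAntidiagonal (f := fun a b => (moebius a : ℤ) • ((q : ℚ) ^ b - 1)), Nfun,
    ← mul_assoc, mul_one_div_cancel (by exact_mod_cast hn.ne'), one_mul]
  simp only [zsmul_eq_mul]

theorem abs_Nfun_le {q : ℕ} (hq : 1 ≤ q) (d : ℕ) : |Nfun d q| ≤ (q : ℚ) ^ d := by
  have hq' : (1 : ℚ) ≤ q := by exact_mod_cast hq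
  have hterm : ∀ a ∈ d.divisors,
      |((moebius a : ℤ) : ℚ) * ((q : ℚ) ^ (d / a) - 1)| ≤ (q : ℚ) ^ d := by
    intro a _
    have hμ : |((moebius a : ℤ) : ℚ)| ≤ 1 := by exact_mod_cast abs_moebius_le_one
    have hpow : 1 ≤ (q : ℚ) ^ (d / a) := one_le_pow₀ hq'
    rw [abs_mul, abs_of_nonneg (sub_nonneg.mpr hpow)]
    calc _ ≤ 1 * ((q : ℚ) ^ (d / a) - 1) := by gcongr
      _ ≤ (q : ℚ) ^ d := by linarith [pow_le_pow_right₀ hq' (Nat.div_le_self d a)]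
  rcases Nat.eq_zero_or_pos d with rfl | hd
  · simp [Nfun]
  calc |Nfun d q|
      ≤ 1 / d * (#d.divisors • (q : ℚ) ^ d) := by
        rw [Nfun, abs_mul, abs_of_pos (by positivity)]
        gcongr
        exact (abs_sum_le_sum_abs _ _).trans (sum_le_card_nsmul _ _ _ hterm)
    _ ≤ 1 / d * (d * (q : ℚ) ^ d) := by
        rw [nsmul_eq_mul]; gcongr; exact_mod_cast Nat.card_divisors_le_self d
    _ = (q : ℚ) ^ d := by field_simp

theorem summable_mul_pow_div_of_abs_le_pow {a : ℕ → ℝ} {r x : ℝ} (hr : 1 ≤ r)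
    (ha : ∀ d, |a d| ≤ r ^ d) (hrx : r * |x| < 1) :
    Summable fun p : ℕ+ × ℕ+ => a p.1 * (x ^ (p.1 * p.2 : ℕ) / p.2) := by
  have hgeom : Summable fun p : ℕ+ × ℕ+ => (r * |x|) ^ (p.1 * p.2 : ℕ) := by
    simpa using summable_prod_mul_pow 0 (r := r * |x|) (by rwa [norm_of_nonneg (by positivity)])
  refine hgeom.of_norm_bounded fun p => ?_
  have hk : (1 : ℝ) ≤ (p.2 : ℕ) := by exact_mod_cast p.2.pos
  rw [norm_mul, norm_div, norm_pow, norm_eq_abs, norm_eq_abs, mul_pow]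
  calc |a p.1| * (|x| ^ (p.1 * p.2 : ℕ) / ‖((p.2 : ℕ) : ℝ)‖)
      ≤ r ^ (p.1 : ℕ) * (|x| ^ (p.1 * p.2 : ℕ) / 1) := by
        gcongr
        · exact ha _
        · rwa [norm_of_nonneg (by positivity)]
    _ ≤ r ^ (p.1 * p.2 : ℕ) * |x| ^ (p.1 * p.2 : ℕ) := by
        rw [div_one]
        gcongr
        exact Nat.le_mul_of_pos_right _ p.2.pos

theorem sum_divisorsAntidiagonal_mul_pow_div (a : ℕ → ℝ) (x : ℝ) (n : ℕ+) :
    ∑ c : (n : ℕ).divisorsAntidiagonal, a c.1.1 * (x ^ (c.1.1 * c.1.2) / c.1.2)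
      = (∑ d ∈ (n : ℕ).divisors, d * a d) * (x ^ (n : ℕ) / n) := by
  rw [univ_eq_attach, sum_attach _ (fun c : ℕ × ℕ => a c.1 * (x ^ (c.1 * c.2) / (c.2 : ℝ))),
    Nat.sum_divisorsAntidiagonal (fun i j => a i * (x ^ (i * j) / j)), sum_mul]
  refine sum_congr rfl fun d hd => ?_
  have hdn : d ∣ n := Nat.dvd_of_mem_divisors hd
  have hd0 : (d : ℝ) ≠ 0 := by exact_mod_cast (Nat.pos_of_mem_divisors hd).ne'
  rw [Nat.mul_div_cancel' hdn, Nat.cast_div hdn hd0]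
  field_simp

/-- Grouping the double series `∑_{d,k} a(d) x^{dk} / k` by rows gives the left-hand side and
grouping by `n = dk` gives the series of `hS`. -/
theorem hasSum_mul_neg_log_one_sub_pow {a : ℕ → ℝ} {x S : ℝ} (hx : |x| < 1)
    (hf : Summable fun p : ℕ+ × ℕ+ => a p.1 * (x ^ (p.1 * p.2 : ℕ) / p.2))
    (hS : HasSum (fun n : ℕ+ => (∑ d ∈ (n : ℕ).divisors, d * a d) * (x ^ (n : ℕ) / n)) S) :
    HasSum (fun d : ℕ+ => a d * -log (1 - x ^ (d : ℕ))) S := by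
  have hrow (d : ℕ+) :
      HasSum (fun k : ℕ+ => a d * (x ^ (d * k : ℕ) / k)) (a d * -log (1 - x ^ (d : ℕ))) := by
    have hxd : |x ^ (d : ℕ)| < 1 := by
      rw [abs_pow]; exact pow_lt_one₀ (abs_nonneg x) hx d.ne_zero
    refine (hasSum_pnat_iff_hasSum_succ (f := fun k : ℕ => x ^ (d * k : ℕ) / k)).mpr ?_
      |>.mul_left (a d)
    simpa [pow_mul] using hasSum_pow_div_log_of_abs_lt_one hxd
  have hdiag := (sigmaAntidiagonalEquivProd.hasSum_iff.mpr hf.hasSum).sigma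
    fun n => hasSum_fintype _
  simp only [Function.comp_def, sigmaAntidiagonalEquivProd, divisorsAntidiagonalFactors,
    Equiv.coe_fn_mk, PNat.mk_coe, sum_divisorsAntidiagonal_mul_pow_div] at hdiag
  rw [hS.unique hdiag]
  exact hf.hasSum.prod_fiberwise hrow

theorem hasSum_pow_sub_pow_div {x y : ℝ} (hx : |x| < 1) (hy : |y| < 1) :
    HasSum (fun n : ℕ+ => (y ^ (n : ℕ) - x ^ (n : ℕ)) / n) (log (1 - x) - log (1 - y)) := by
  rw [hasSum_pnat_iff_hasSum_succ (f := fun n : ℕ => (y ^ n - x ^ n) / n)]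
  simpa only [Nat.cast_succ, sub_div, neg_sub_neg] using
    (hasSum_pow_div_log_of_abs_lt_one hy).sub (hasSum_pow_div_log_of_abs_lt_one hx)

theorem HasSum.hasProd_rpow {ι : Type*} {b c : ι → ℝ} {s : ℝ} (hb : ∀ i, 0 < b i)
    (h : HasSum (fun i => c i * log (b i)) s) : HasProd (fun i => b i ^ c i) (rexp s) := by
  simpa [Function.comp_def, rpow_def_of_pos (hb _), mul_comm] using h.rexp

theorem hasSum_Nfun_mul_log_one_sub_pow {q : ℕ} {x : ℝ} (hq : 1 ≤ q) (hqx : q * |x| < 1) :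
    HasSum (fun d : ℕ+ => (Nfun d q : ℝ) * log (1 - x ^ (d : ℕ)))
      (log (1 - q * x) - log (1 - x)) := by
  have hq' : (1 : ℝ) ≤ q := by exact_mod_cast hq
  have hx : |x| < 1 := (le_mul_of_one_le_left (abs_nonneg x) hq').trans_lt hqx
  have ha (d : ℕ) : |(Nfun d q : ℝ)| ≤ (q : ℝ) ^ d := by exact_mod_cast abs_Nfun_le hq d
  have hdiv (n : ℕ+) : ∑ d ∈ (n : ℕ).divisors, d * (Nfun d q : ℝ) = (q : ℝ) ^ (n : ℕ) - 1 := by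
    exact_mod_cast sum_divisors_mul_Nfun q n.pos
  have hS : HasSum
      (fun n : ℕ+ => (∑ d ∈ (n : ℕ).divisors, d * (Nfun d q : ℝ)) * (x ^ (n : ℕ) / n))
      (log (1 - x) - log (1 - q * x)) := by
    convert hasSum_pow_sub_pow_div hx (y := q * x) (by rwa [abs_mul, Nat.abs_cast]) using 2
    rw [hdiv, mul_pow]; ring
  simpa only [mul_neg, neg_neg, neg_sub] using
    (hasSum_mul_neg_log_one_sub_pow hx (summable_mul_pow_div_of_abs_le_pow hq' ha hqx) hS).neg

theorem statement6_general (q : ℕ) (x : ℝ) (hx : |x| < 1 / q) :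
    Multipliable (fun d : ℕ => (1 - x ^ (d + 1)) ^ ((Nfun (d + 1) q : ℚ) : ℝ)) ∧
    ∏' d : ℕ, (1 - x ^ (d + 1)) ^ ((Nfun (d + 1) q : ℚ) : ℝ) = (1 - q * x) / (1 - x) := by
  have hq : 1 ≤ q := by exact_mod_cast one_div_pos.mp ((abs_nonneg x).trans_lt hx)
  have hqx : q * |x| < 1 := by rwa [lt_div_iff₀' (by positivity)] at hx
  have hx1 : |x| < 1 :=
    (le_mul_of_one_le_left (abs_nonneg x) (by exact_mod_cast hq)).trans_lt hqx
  have hbase (d : ℕ+) : 0 < 1 - x ^ (d : ℕ) :=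
    sub_pos.mpr (lt_of_abs_lt (by rw [abs_pow]; exact pow_lt_one₀ (abs_nonneg x) hx1 d.ne_zero))
  have hlog := hasSum_Nfun_mul_log_one_sub_pow hq hqx
  have hprod := hasProd_pnat_iff_hasProd_succ
    (f := fun d : ℕ => (1 - x ^ d) ^ (Nfun d q : ℝ)) |>.mp (hlog.hasProd_rpow hbase)
  rw [exp_sub, exp_log (sub_pos.mpr (lt_of_abs_lt hx1)),
    exp_log (sub_pos.mpr (lt_of_abs_lt (by rwa [abs_mul, Nat.abs_cast])))] at hprod
  exact ⟨hprod.multipliable, hprod.tprod_eq⟩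

/-- Lemma 2.3(a): for an integer `q ≥ 2` and a real `x` with `|x| < 1/q`, the family
`d ↦ (1 - x^d)^{N(d,q)}` (over `d ≥ 1`, real-power exponentiation) is multipliable and
`∏_{d ≥ 1} (1 - x^d)^{N(d,q)} = (1 - qx)/(1 - x)`. -/
theorem statement6 (q : ℕ) (hq : 2 ≤ q) (x : ℝ) (hx : |x| < 1 / q) :
    Multipliable (fun d : ℕ => (1 - x ^ (d + 1)) ^ ((Nfun (d + 1) q : ℚ) : ℝ)) ∧
    ∏' d : ℕ, (1 - x ^ (d + 1)) ^ ((Nfun (d + 1) q : ℚ) : ℝ) = (1 - q * x) / (1 - x) :=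
  statement6_general q x hx
end

section
/- Let q ≥ 2 be an integer and let x be a real number with |x| < 1/q. Then the family d ↦ ((1 − x^d)/(1 + x^d))^{Ñ(d,q)} over odd d ≥ 1 is multipliable (real-power exponentiation with positive base), and Π_{d odd} ((1 − x^d)/(1 + x^d))^{Ñ(d,q)} = ((1 − x)(1 − qx))/((1 + x)(1 + qx)). -/
/-- `Ñ(d,q) = (1/d) Σ_{a ∣ d} μ(a) (q^{d/a} + 1)` for odd `d`, and `0` for even `d`. -/
noncomputable def Ntilde (d q : ℕ) : ℚ :=
  if Odd d then
    (1 / (d : ℚ)) *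
      ∑ a ∈ d.divisors, ((ArithmeticFunction.moebius a : ℤ) : ℚ) * ((q : ℚ) ^ (d / a) + 1)
  else 0

/-!
Taking logarithms, `log ((1 - y) / (1 + y)) = ∑_{k odd} -2 y^k / k`, so the logarithm of
the product is the double series `∑_d Ñ(d,q) ∑_{k odd} -2 x^{dk} / k`. It converges absolutely
because `|Ñ(d,q)| ≤ q^d + 1` and `q |x| < 1`. Regrouping it by `n = d k` and using the Möbius
inversion `∑_{d ∣ n} d Ñ(d,q) = q^n + 1` (`n` odd) gives
`∑_{n odd} -2 (q^n + 1) x^n / n = log ((1 - x) / (1 + x)) + log ((1 - q x) / (1 + q x))`.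
-/

open Real Finset ArithmeticFunction
open scoped ArithmeticFunction.Moebius

/-- Regrouping the Lambert-type double series `∑_d a d ∑_k b k x^{dk}` by `n = d k`. -/
theorem hasSum_lambert_regroup {R : Type*} [CommSemiring R] [TopologicalSpace R]
    [IsTopologicalSemiring R] [T3Space R] {a b : ℕ → R} {x S : R} {g : ℕ+ → R}
    (hsum : Summable fun p : ℕ+ × ℕ+ => a p.1 * b p.2 * x ^ (p.1 * p.2 : ℕ))
    (hg : ∀ d : ℕ+, HasSum (fun k : ℕ+ => b k * (x ^ (d : ℕ)) ^ (k : ℕ)) (g d))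
    (hS : HasSum (fun n : ℕ+ =>
      (∑ p ∈ (n : ℕ).divisorsAntidiagonal, a p.1 * b p.2) * x ^ (n : ℕ)) S) :
    HasSum (fun d : ℕ+ => a d * g d) S := by
  set T := ∑' p : ℕ+ × ℕ+, a p.1 * b p.2 * x ^ (p.1 * p.2 : ℕ)
  have hrows : HasSum (fun d : ℕ+ => a d * g d) T :=
    hsum.hasSum.prod_fiberwise fun d => by
      simpa only [mul_assoc, pow_mul] using (hg d).mul_left (a d)
  have hdiag : HasSum (fun n : ℕ+ =>
      (∑ p ∈ (n : ℕ).divisorsAntidiagonal, a p.1 * b p.2) * x ^ (n : ℕ)) T := by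
    refine (sigmaAntidiagonalEquivProd.hasSum_iff.2 hsum.hasSum).sigma fun n => ?_
    convert hasSum_fintype _ using 1
    rw [sum_mul, ← sum_attach, univ_eq_attach]
    refine sum_congr rfl fun p _ => ?_
    change _ = a p.1.1 * b p.1.2 * x ^ (p.1.1 * p.1.2)
    rw [(Nat.mem_divisorsAntidiagonal.1 p.2).1]
  exact hS.unique hdiag ▸ hrows

theorem sum_divisors_mul_Ntilde (q : ℕ) {n : ℕ} (hn : Odd n) :
    ∑ d ∈ n.divisors, (d : ℚ) * Ntilde d q = (q : ℚ) ^ n + 1 := by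
  refine (sum_eq_iff_sum_mul_moebius_eq_on (f := fun d => (d : ℚ) * Ntilde d q)
    (g := fun n => (q : ℚ) ^ n + 1) {n | Odd n} fun m n hmn hn => hn.of_dvd_nat hmn).2
    (fun d _ hodd => ?_) n hn.pos hn
  rw [Nat.sum_divisorsAntidiagonal (fun a b => (μ a : ℚ) * ((q : ℚ) ^ b + 1)), Ntilde,
    if_pos (show Odd d from hodd), ← mul_assoc, mul_one_div_cancel (by positivity), one_mul]

theorem abs_Ntilde_le {q : ℕ} (hq : 1 ≤ q) (d : ℕ) : |Ntilde d q| ≤ (q : ℚ) ^ d + 1 := by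
  unfold Ntilde
  split_ifs with hd
  · have hd0 : (0 : ℚ) < d := by exact_mod_cast hd.pos
    have hterm : ∀ a ∈ d.divisors,
        |(μ a : ℚ) * ((q : ℚ) ^ (d / a) + 1)| ≤ (q : ℚ) ^ d + 1 := by
      intro a _
      rw [abs_mul, abs_of_pos (by positivity : (0 : ℚ) < (q : ℚ) ^ (d / a) + 1)]
      have hμ : |(μ a : ℚ)| ≤ 1 := by exact_mod_cast abs_moebius_le_one
      have hpow : (q : ℚ) ^ (d / a) ≤ (q : ℚ) ^ d :=
        pow_le_pow_right₀ (by exact_mod_cast hq) (Nat.div_le_self d a)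
      simpa using mul_le_mul hμ (add_le_add_left hpow 1) (by positivity) zero_le_one
    have hcard : (#d.divisors : ℚ) ≤ d := by exact_mod_cast Nat.card_divisors_le_self d
    calc |1 / (d : ℚ) * ∑ a ∈ d.divisors, (μ a : ℚ) * ((q : ℚ) ^ (d / a) + 1)|
        ≤ 1 / (d : ℚ) * (#d.divisors * ((q : ℚ) ^ d + 1)) := by
          rw [abs_mul, abs_of_pos (by positivity), ← nsmul_eq_mul]
          gcongr
          exact (abs_sum_le_sum_abs _ _).trans (sum_le_card_nsmul _ _ _ hterm)
      _ ≤ 1 / (d : ℚ) * (d * ((q : ℚ) ^ d + 1)) := by gcongr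
      _ = (q : ℚ) ^ d + 1 := by field_simp
  · rw [abs_zero]
    positivity

noncomputable def logRatioCoeff (k : ℕ) : ℝ := if Odd k then -2 / k else 0

theorem abs_logRatioCoeff_le (k : ℕ) : |logRatioCoeff k| ≤ 2 := by
  unfold logRatioCoeff
  split_ifs with hk
  · rw [abs_div, abs_neg, abs_two, Nat.abs_cast]
    exact div_le_self zero_le_two (by exact_mod_cast hk.pos)
  · norm_num

theorem one_sub_div_one_add_pos {y : ℝ} (hy : |y| < 1) : 0 < (1 - y) / (1 + y) := by
  obtain ⟨h₁, h₂⟩ := abs_lt.1 hy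
  exact div_pos (by linarith) (by linarith)

theorem hasSum_logRatioCoeff_mul_pow {y : ℝ} (hy : |y| < 1) :
    HasSum (fun k : ℕ+ => logRatioCoeff k * y ^ (k : ℕ)) (log ((1 - y) / (1 + y))) := by
  obtain ⟨h₁, h₂⟩ := abs_lt.1 hy
  have hodd : Function.Injective fun j : ℕ => (2 * j).succPNat := fun i j hij => by
    simpa using hij
  rw [log_div (by linarith) (by linarith), ← neg_sub, ← hodd.hasSum_iff]
  · refine (hasSum_log_sub_log_of_abs_lt_one hy).neg.congr_fun fun j => ?_
    have hj : Odd (2 * j + 1) := odd_two_mul_add_one j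
    rw [Function.comp_apply, Nat.succPNat_coe, Nat.succ_eq_add_one, logRatioCoeff, if_pos hj]
    push_cast
    ring
  · rintro k hk
    rw [logRatioCoeff, if_neg, zero_mul]
    rintro ⟨j, hj⟩
    exact hk ⟨j, PNat.coe_injective (by simp [hj])⟩

theorem sum_divisorsAntidiagonal_Ntilde_mul_logRatioCoeff (q n : ℕ) :
    ∑ p ∈ n.divisorsAntidiagonal, (Ntilde p.1 q : ℝ) * logRatioCoeff p.2 =
      logRatioCoeff n * ((q : ℝ) ^ n + 1) := by
  by_cases hn : Odd n
  · have hterm : ∀ p ∈ n.divisorsAntidiagonal,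
        (Ntilde p.1 q : ℝ) * logRatioCoeff p.2 = -2 / n * (p.1 * Ntilde p.1 q : ℚ) := by
      intro p hp
      obtain ⟨rfl, -⟩ := Nat.mem_divisorsAntidiagonal.1 hp
      obtain ⟨h1, h2⟩ := Nat.odd_mul.1 hn
      have : (p.1 : ℝ) ≠ 0 := by exact_mod_cast h1.pos.ne'
      rw [logRatioCoeff, if_pos h2]
      push_cast
      field_simp
    rw [sum_congr rfl hterm, ← mul_sum, Nat.sum_divisorsAntidiagonal (fun a _ =>
      (((a : ℚ) * Ntilde a q : ℚ) : ℝ)), ← Rat.cast_sum, sum_divisors_mul_Ntilde q hn,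
      logRatioCoeff, if_pos hn]
    push_cast
    ring
  · rw [logRatioCoeff, if_neg hn, zero_mul]
    refine sum_eq_zero fun p hp => ?_
    obtain ⟨rfl, -⟩ := Nat.mem_divisorsAntidiagonal.1 hp
    rcases not_and_or.1 (mt Nat.odd_mul.2 hn) with h | h
    · simp [Ntilde, h]
    · simp [logRatioCoeff, h]

theorem summable_Ntilde_mul_logRatioCoeff_mul_pow {q : ℕ} (hq : 1 ≤ q) {x : ℝ}
    (hqx : q * |x| < 1) :
    Summable fun p : ℕ+ × ℕ+ =>
      (Ntilde p.1 q : ℝ) * logRatioCoeff p.2 * x ^ (p.1 * p.2 : ℕ) := by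
  have hgeom : Summable fun p : ℕ+ × ℕ+ => 4 * ((q : ℝ) * |x|) ^ (p.1 * p.2 : ℕ) := by
    simpa using (summable_prod_mul_pow 0 (r := (q : ℝ) * |x|) (by
      rwa [Real.norm_eq_abs, abs_of_nonneg (by positivity)])).mul_left 4
  refine hgeom.of_norm_bounded fun ⟨d, k⟩ => ?_
  have hq' : (1 : ℝ) ≤ q := by exact_mod_cast hq
  have hN : |(Ntilde d q : ℝ)| ≤ 2 * (q : ℝ) ^ (d * k : ℕ) := by
    have hN' : |(Ntilde d q : ℝ)| ≤ (q : ℝ) ^ (d : ℕ) + 1 := by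
      exact_mod_cast abs_Ntilde_le hq d
    have hqd : (1 : ℝ) ≤ (q : ℝ) ^ (d : ℕ) := one_le_pow₀ hq'
    have hdk : (q : ℝ) ^ (d : ℕ) ≤ (q : ℝ) ^ (d * k : ℕ) :=
      pow_le_pow_right₀ hq' (Nat.le_mul_of_pos_right _ k.pos)
    linarith
  calc ‖(Ntilde d q : ℝ) * logRatioCoeff k * x ^ (d * k : ℕ)‖
      = |(Ntilde d q : ℝ)| * |logRatioCoeff k| * |x| ^ (d * k : ℕ) := by
        rw [Real.norm_eq_abs, abs_mul, abs_mul, abs_pow]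
    _ ≤ (2 * (q : ℝ) ^ (d * k : ℕ)) * 2 * |x| ^ (d * k : ℕ) := by
        gcongr
        exact abs_logRatioCoeff_le k
    _ = 4 * ((q : ℝ) * |x|) ^ (d * k : ℕ) := by
        rw [mul_pow]; ring

theorem hasSum_Ntilde_mul_log {q : ℕ} (hq : 1 ≤ q) {x : ℝ} (hqx : q * |x| < 1) :
    HasSum (fun d : ℕ+ => (Ntilde d q : ℝ) * log ((1 - x ^ (d : ℕ)) / (1 + x ^ (d : ℕ))))
      (log ((1 - x) / (1 + x)) + log ((1 - q * x) / (1 + q * x))) := by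
  have hx : |x| < 1 :=
    (le_mul_of_one_le_left (abs_nonneg x) (by exact_mod_cast hq)).trans_lt hqx
  have hqx' : |(q : ℝ) * x| < 1 := by rwa [abs_mul, Nat.abs_cast]
  have hxd (d : ℕ+) : |x ^ (d : ℕ)| < 1 := by
    rw [abs_pow]
    exact pow_lt_one₀ (abs_nonneg x) hx d.ne_zero
  refine hasSum_lambert_regroup (a := fun d => (Ntilde d q : ℝ)) (b := logRatioCoeff)
    (summable_Ntilde_mul_logRatioCoeff_mul_pow hq hqx)
    (fun d => hasSum_logRatioCoeff_mul_pow (hxd d)) ?_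
  refine ((hasSum_logRatioCoeff_mul_pow hx).add (hasSum_logRatioCoeff_mul_pow hqx')).congr_fun
    fun n => ?_
  rw [sum_divisorsAntidiagonal_Ntilde_mul_logRatioCoeff, mul_pow]
  ring

theorem statement8_general (q : ℕ) (x : ℝ) (hx : |x| < 1 / q) :
    Multipliable
      (fun d : ℕ => ((1 - x ^ (d + 1)) / (1 + x ^ (d + 1))) ^ ((Ntilde (d + 1) q : ℚ) : ℝ)) ∧
    ∏' d : ℕ, ((1 - x ^ (d + 1)) / (1 + x ^ (d + 1))) ^ ((Ntilde (d + 1) q : ℚ) : ℝ) =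
      ((1 - x) * (1 - q * x)) / ((1 + x) * (1 + q * x)) := by
  have hq : (0 : ℝ) < q := one_div_pos.1 ((abs_nonneg x).trans_lt hx)
  have hqx : q * |x| < 1 := by rwa [lt_div_iff₀ hq, mul_comm] at hx
  have hx₁ : |x| < 1 := (le_mul_of_one_le_left (abs_nonneg x) (by exact_mod_cast hq)).trans_lt hqx
  have hqx₁ : |(q : ℝ) * x| < 1 := by rwa [abs_mul, Nat.abs_cast]
  have hlog := Equiv.pnatEquivNat.symm.hasSum_iff.2
    (hasSum_Ntilde_mul_log (Nat.cast_pos.1 hq) hqx)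
  have hprod : HasProd
      (fun d : ℕ => ((1 - x ^ (d + 1)) / (1 + x ^ (d + 1))) ^ (Ntilde (d + 1) q : ℝ)) _ :=
    hlog.rexp.congr_fun fun d => by
      rw [rpow_def_of_pos (one_sub_div_one_add_pos (by
        rwa [abs_pow, pow_lt_one_iff_of_nonneg (abs_nonneg x) d.succ_ne_zero])), mul_comm]
      rfl
  refine ⟨hprod.multipliable, hprod.tprod_eq.trans ?_⟩
  rw [exp_add, exp_log (one_sub_div_one_add_pos hx₁), exp_log (one_sub_div_one_add_pos hqx₁),
    div_mul_div_comm]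

/-- Lemma 2.3(c): for an integer `q ≥ 2` and a real `x` with `|x| < 1/q`, the family
`d ↦ ((1 - x^d)/(1 + x^d))^{Ñ(d,q)}` over odd `d ≥ 1` (here over all `d ≥ 1`, since
`Ñ(d,q) = 0` for even `d`) is multipliable, and
`∏_{d odd} ((1 - x^d)/(1 + x^d))^{Ñ(d,q)} = ((1 - x)(1 - qx))/((1 + x)(1 + qx))`. -/
theorem statement8 (q : ℕ) (hq : 2 ≤ q) (x : ℝ) (hx : |x| < 1 / q) :
    Multipliable
      (fun d : ℕ => ((1 - x ^ (d + 1)) / (1 + x ^ (d + 1))) ^ ((Ntilde (d + 1) q : ℚ) : ℝ)) ∧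
    ∏' d : ℕ, ((1 - x ^ (d + 1)) / (1 + x ^ (d + 1))) ^ ((Ntilde (d + 1) q : ℚ) : ℝ) =
      ((1 - x) * (1 - q * x)) / ((1 + x) * (1 + q * x)) :=
  statement8_general q x hx
end

section
/- For every integer n ≥ 1 and every real number q > 1, Σ_{λ ⊢ n} 1/C_{U,λ}(q) = 1/(q^n·(1 + q^{−1})·(1 − q^{−2})···(1 − (−1)^n q^{−n})), i.e. the sum over all partitions λ of n of 1/C_{U,λ}(q) equals 1/(q^n·Π_{k=1}^{n}(1 − (−1)^k q^{−k})). -/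
/-!
Put `x = q⁻¹` and `t = -q⁻¹`. Since `q^{m(m-1)/2} ∏_{k ≤ m} (q^k - (-1)^k) = q^{m²} (t;t)_m` and
`k(λ) + Σ_i m_i² = Σ_j (λ'_j)²`, one has `1 / C_{U,λ}(q) = x^{Σ_j (λ'_j)²} / ∏_i (t;t)_{m_i}`.
Removing the first column of `λ`, of height `b = ℓ(λ)`, divides this weight by
`x^{b²} / (t;t)_{m_1}`, so sums over partitions weighted by a function of their length satisfy a
recursion in `n`. As `t² = x²`, one has `x^{b²} x^{n-b} = x^n t^{b(b-1)}`, and the recursion is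
solved by the `q`-Vandermonde identity: in its finite form for the partial sums, and in its
limiting form (`[m, k]_t` replaced by `1 / (t;t)_k`) for the total `x^n / (t;t)_n`. The same
argument with `t = x` gives Stong's formula for `GL_n`.
-/

/-- `k(λ) = 2 Σ_{i<j} i m_i m_j + Σ_i (i-1) m_i²`, where `m_i` is the number of parts of `λ`
of size `i`. -/
def kPart {n : ℕ} (lam : n.Partition) : ℕ :=
  2 * ∑ i ∈ Finset.range (n + 1), ∑ j ∈ Finset.range (n + 1),
      (if i < j then i * lam.parts.count i * lam.parts.count j else 0)
    + ∑ i ∈ Finset.range (n + 1), (i - 1) * lam.parts.count i ^ 2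

/-- `C_{U,λ}(q) = q^{k(λ)} ∏_i |U(m_i, q)|`, where
`|U(m,q)| = q^{m(m-1)/2} (q^m - (-1)^m) ⋯ (q + 1)`, evaluated at a real number `q`. -/
def CU {n : ℕ} (lam : n.Partition) (q : ℝ) : ℝ :=
  q ^ kPart lam *
    ∏ i ∈ Finset.range (n + 1),
      (q ^ (lam.parts.count i * (lam.parts.count i - 1) / 2) *
        ∏ k ∈ Finset.Icc 1 (lam.parts.count i), (q ^ k - (-1 : ℝ) ^ k))

open Finset

section QBinomial

variable {R : Type*} [CommRing R] (t : R)

def qPochhammer (m : ℕ) : R := ∏ k ∈ Icc 1 m, (1 - t ^ k)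

@[simp] lemma qPochhammer_zero : qPochhammer t 0 = 1 := by simp [qPochhammer]

lemma qPochhammer_succ (m : ℕ) :
    qPochhammer t (m + 1) = qPochhammer t m * (1 - t ^ (m + 1)) :=
  prod_Icc_succ_top (by omega) _

def qBinomial : ℕ → ℕ → R
  | _, 0 => 1
  | 0, _ + 1 => 0
  | p + 1, l + 1 => t ^ (l + 1) * qBinomial p (l + 1) + qBinomial p l

@[simp] lemma qBinomial_zero_right (p : ℕ) : qBinomial t p 0 = 1 := by cases p <;> rfl

lemma qBinomial_succ_succ (p l : ℕ) :
    qBinomial t (p + 1) (l + 1) = t ^ (l + 1) * qBinomial t p (l + 1) + qBinomial t p l := rfl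

lemma qBinomial_eq_zero_of_lt : ∀ {p l : ℕ}, p < l → qBinomial t p l = 0
  | 0, _ + 1, _ => rfl
  | p + 1, l + 1, h => by
    rw [qBinomial_succ_succ, qBinomial_eq_zero_of_lt (by omega),
      qBinomial_eq_zero_of_lt (by omega : p < l), mul_zero, add_zero]

@[simp] lemma qBinomial_self : ∀ p : ℕ, qBinomial t p p = 1
  | 0 => rfl
  | p + 1 => by
    rw [qBinomial_succ_succ, qBinomial_eq_zero_of_lt t (by omega), qBinomial_self p,
      mul_zero, zero_add]

lemma qBinomial_mul_qPochhammer_mul_qPochhammer :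
    ∀ {p l : ℕ}, l ≤ p →
      qBinomial t p l * qPochhammer t l * qPochhammer t (p - l) = qPochhammer t p
  | _, 0, _ => by simp
  | p + 1, l + 1, h => by
    rcases (show l = p ∨ l + 1 ≤ p by omega) with rfl | hlp
    · simp
    · have h₁ := qBinomial_mul_qPochhammer_mul_qPochhammer hlp
      have h₂ := qBinomial_mul_qPochhammer_mul_qPochhammer (show l ≤ p by omega)
      obtain ⟨d, rfl⟩ : ∃ d, p = l + 1 + d := ⟨p - (l + 1), by omega⟩
      rw [show l + 1 + d - (l + 1) = d by omega, qPochhammer_succ t l] at h₁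
      rw [show l + 1 + d - l = d + 1 by omega, qPochhammer_succ] at h₂
      rw [qBinomial_succ_succ, show l + 1 + d + 1 - (l + 1) = d + 1 by omega,
        qPochhammer_succ t (l + 1 + d), qPochhammer_succ t l, qPochhammer_succ t d]
      linear_combination (t ^ (l + 1) * (1 - t ^ (d + 1))) * h₁ + (1 - t ^ (l + 1)) * h₂

-- The truncated `p - l` is harmless: `qBinomial t p l = 0` for `l > p`.
def qVandermondeSum (A : ℕ → R) (p r : ℕ) : R :=
  ∑ kl ∈ antidiagonal r, t ^ (kl.1 * (p - kl.2)) * A kl.1 * qBinomial t p kl.2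

variable {t} (A : ℕ → R)

lemma qVandermondeSum_zero_left (r : ℕ) : qVandermondeSum t A 0 r = A r := by
  cases r with
  | zero => simp [qVandermondeSum]
  | succ r =>
    rw [qVandermondeSum, Nat.sum_antidiagonal_succ', sum_eq_zero fun kl _ =>
      by rw [qBinomial_eq_zero_of_lt t (by omega), mul_zero]]
    simp

lemma qVandermondeSum_zero_right (p : ℕ) : qVandermondeSum t A p 0 = A 0 := by
  simp [qVandermondeSum]

lemma qVandermondeSum_succ_succ (p r : ℕ) :
    qVandermondeSum t A (p + 1) (r + 1) =
      t ^ (r + 1) * qVandermondeSum t A p (r + 1) + qVandermondeSum t A p r := by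
  have shift : ∀ kl ∈ antidiagonal r,
      t ^ (kl.1 * (p + 1 - (kl.2 + 1))) * A kl.1 * qBinomial t (p + 1) (kl.2 + 1) =
        t ^ (r + 1) * (t ^ (kl.1 * (p - (kl.2 + 1))) * A kl.1 * qBinomial t p (kl.2 + 1)) +
          t ^ (kl.1 * (p - kl.2)) * A kl.1 * qBinomial t p kl.2 := by
    rintro ⟨k, l⟩ hkl
    rw [HasAntidiagonal.mem_antidiagonal] at hkl
    simp only [qBinomial_succ_succ, Nat.add_sub_add_right]
    rcases lt_or_ge p (l + 1) with hp | hp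
    · rw [qBinomial_eq_zero_of_lt t hp]
      ring
    · obtain ⟨d, rfl⟩ : ∃ d, p = l + 1 + d := ⟨p - (l + 1), by omega⟩
      rw [show l + 1 + d - l = d + 1 by omega, show l + 1 + d - (l + 1) = d by omega, ← hkl]
      ring
  rw [qVandermondeSum, Nat.sum_antidiagonal_succ', sum_congr rfl shift, sum_add_distrib,
    qVandermondeSum, Nat.sum_antidiagonal_succ', mul_add, mul_sum, qVandermondeSum]
  simp only [Nat.sub_zero, qBinomial_zero_right, mul_one]
  ring

theorem qVandermondeSum_eq_of_pascal (F : ℕ → ℕ → R) (hF₀ : F 0 = A)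
    (hF_zero : ∀ p, F (p + 1) 0 = F p 0)
    (hF_succ : ∀ p r, F (p + 1) (r + 1) = t ^ (r + 1) * F p (r + 1) + F p r) :
    ∀ p r, qVandermondeSum t A p r = F p r
  | 0, r => by rw [qVandermondeSum_zero_left, hF₀]
  | p + 1, 0 => by
    rw [qVandermondeSum_zero_right, hF_zero, ← qVandermondeSum_eq_of_pascal F hF₀ hF_zero hF_succ p 0,
      qVandermondeSum_zero_right]
  | p + 1, r + 1 => by
    rw [qVandermondeSum_succ_succ, hF_succ, qVandermondeSum_eq_of_pascal F hF₀ hF_zero hF_succ p,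
      qVandermondeSum_eq_of_pascal F hF₀ hF_zero hF_succ p]

theorem qVandermonde (m p r : ℕ) :
    qVandermondeSum t (qBinomial t m) p r = qBinomial t (m + p) r :=
  qVandermondeSum_eq_of_pascal _ (fun p r => qBinomial t (m + p) r) rfl (by simp)
    (fun p r => qBinomial_succ_succ t (m + p) r) p r

lemma qVandermondeSum_pred_self {n : ℕ} (hn : 1 ≤ n) :
    qVandermondeSum t A (n - 1) n =
      ∑ b ∈ Icc 1 n, t ^ (b * (b - 1)) * A b * qBinomial t (n - 1) (n - b) := by
  rw [qVandermondeSum, Nat.sum_antidiagonal_eq_sum_range_succ_mk, range_eq_Ico,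
    sum_eq_sum_Ico_succ_bot n.succ_pos, zero_add, Nat.succ_eq_add_one, Ico_add_one_right_eq_Icc]
  simp only [Nat.sub_zero, qBinomial_eq_zero_of_lt t (Nat.sub_lt hn one_pos), mul_zero, zero_add]
  exact sum_congr rfl fun b hb => by
    rw [show n - 1 - (n - b) = b - 1 by have := (mem_Icc.mp hb).2; omega]

end QBinomial

theorem qVandermonde_inv {K : Type*} [Field K] {t : K} (ht : ∀ k, qPochhammer t k ≠ 0)
    (p r : ℕ) :
    qVandermondeSum t (fun k => (qPochhammer t k)⁻¹) p r = (qPochhammer t r)⁻¹ := by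
  refine qVandermondeSum_eq_of_pascal _ (fun _ r => (qPochhammer t r)⁻¹) rfl (fun _ => rfl)
    (fun _ r => ?_) p r
  have h := ht (r + 1)
  rw [qPochhammer_succ] at h ⊢
  have h₁ : qPochhammer t r ≠ 0 := left_ne_zero_of_mul h
  have h₂ : 1 - t ^ (r + 1) ≠ 0 := right_ne_zero_of_mul h
  field_simp
  ring

lemma qPochhammer_ne_zero {t : ℝ} (ht : |t| ≠ 1) (m : ℕ) : qPochhammer t m ≠ 0 := by
  refine prod_ne_zero_iff.mpr fun k hk h => ht ?_
  have hk : k ≠ 0 := by have := (mem_Icc.mp hk).1; omega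
  rw [← pow_eq_one_iff_of_nonneg (abs_nonneg t) hk, pow_abs, ← sub_eq_zero.mp h, abs_one]

namespace Multiset

lemma prod_count_of_toFinset_subset {M : Type*} [CommMonoid M] {s : Multiset ℕ} {F : Finset ℕ}
    (h : s.toFinset ⊆ F) (f : ℕ → M) (hf : f 0 = 1) :
    ∏ i ∈ F, f (s.count i) = ∏ i ∈ s.toFinset, f (s.count i) :=
  (prod_subset h fun i _ hi => by rw [count_eq_zero.mpr (by simpa using hi), hf]).symm

lemma sum_map_eq_sum_count {s : Multiset ℕ} {F : Finset ℕ} (h : s.toFinset ⊆ F) (f : ℕ → ℕ) :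
    (s.map f).sum = ∑ i ∈ F, s.count i * f i := by
  simp only [sum_multiset_map_count, smul_eq_mul]
  exact sum_subset h fun i _ hi => by rw [count_eq_zero.mpr (by simpa using hi), zero_mul]

def addColumn (b : ℕ) (s : Multiset ℕ) : Multiset ℕ := s.map (· + 1) + replicate (b - card s) 1

def dropColumn (s : Multiset ℕ) : Multiset ℕ := (s.map (· - 1)).filter (· ≠ 0)

variable {b : ℕ} {s : Multiset ℕ}

lemma pos_of_mem_addColumn {p : ℕ} (hp : p ∈ addColumn b s) : 0 < p := by
  rcases mem_add.mp hp with hp | hp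
  · obtain ⟨q, -, rfl⟩ := mem_map.mp hp
    omega
  · rw [eq_of_mem_replicate hp]
    omega

lemma card_addColumn (h : card s ≤ b) : card (addColumn b s) = b := by
  simp only [addColumn, card_add, card_map, card_replicate]
  omega

lemma sum_addColumn (h : card s ≤ b) : (addColumn b s).sum = s.sum + b := by
  simp only [addColumn, sum_add, sum_map_add, map_id', sum_replicate, map_const',
    smul_eq_mul, mul_one]
  omega

lemma count_one_addColumn (hs : ∀ p ∈ s, 0 < p) : count 1 (addColumn b s) = b - card s := by
  rw [addColumn, count_add, count_replicate_self, count_eq_zero.mpr, zero_add]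
  simp only [mem_map, not_exists, not_and]
  intro p hp h
  have := hs p hp
  omega

lemma count_succ_addColumn {i : ℕ} (hi : i ≠ 0) : count (i + 1) (addColumn b s) = count i s := by
  rw [addColumn, count_add, count_map_eq_count' _ _ (add_left_injective 1),
    count_replicate, if_neg (by omega), add_zero]

lemma toFinset_addColumn_subset :
    (addColumn b s).toFinset ⊆ insert 1 (s.toFinset.map ⟨(· + 1), add_left_injective 1⟩) := by
  intro p hp
  simp only [addColumn, Multiset.mem_toFinset, mem_add, mem_map] at hp
  simp only [Finset.mem_insert, Finset.mem_map, Multiset.mem_toFinset, Function.Embedding.coeFn_mk]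
  rcases hp with ⟨q, hq, rfl⟩ | hp
  · exact Or.inr ⟨q, hq, rfl⟩
  · exact Or.inl (eq_of_mem_replicate hp)

lemma dropColumn_cons (p : ℕ) (s : Multiset ℕ) :
    dropColumn (p ::ₘ s) = if p ≤ 1 then dropColumn s else (p - 1) ::ₘ dropColumn s := by
  rw [dropColumn, map_cons]
  split_ifs with hp
  · exact filter_cons_of_neg _ (by omega)
  · exact filter_cons_of_pos _ (by omega)

lemma pos_of_mem_dropColumn {p : ℕ} (hp : p ∈ dropColumn s) : 0 < p :=
  Nat.pos_of_ne_zero (mem_filter.mp hp).2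

lemma card_dropColumn_le : card (dropColumn s) ≤ card s :=
  (card_le_card (filter_le _ _)).trans (card_map _ _).le

lemma sum_dropColumn (hs : ∀ p ∈ s, 0 < p) : (dropColumn s).sum + card s = s.sum := by
  induction s using Multiset.induction_on with
  | empty => rfl
  | cons p s ih =>
    have hp := hs p (mem_cons_self p s)
    have ih := ih fun q hq => hs q (mem_cons_of_mem hq)
    rw [dropColumn_cons]
    split_ifs <;> simp only [sum_cons, card_cons] <;> omega

lemma dropColumn_addColumn (hs : ∀ p ∈ s, 0 < p) : dropColumn (addColumn b s) = s := by
  simp only [dropColumn, addColumn, map_add, map_map, Function.comp_def, Nat.add_sub_cancel,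
    map_id', map_replicate, filter_add]
  rw [filter_eq_self.mpr fun p hp => (hs p hp).ne',
    filter_eq_nil.mpr fun p hp => by simp [eq_of_mem_replicate hp], add_zero]

lemma addColumn_dropColumn (hs : ∀ p ∈ s, 0 < p) : addColumn (card s) (dropColumn s) = s := by
  induction s using Multiset.induction_on with
  | empty => simp [addColumn, dropColumn]
  | cons p s ih =>
    have hp := hs p (mem_cons_self p s)
    have ih := ih fun q hq => hs q (mem_cons_of_mem hq)
    have hle : card (dropColumn s) ≤ card s := card_dropColumn_le
    rw [addColumn] at ih ⊢
    rw [dropColumn_cons]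
    split_ifs with hp1
    · rw [card_cons, show card s + 1 - card (dropColumn s) = card s - card (dropColumn s) + 1 by
        omega, replicate_succ, add_cons, ih, show p = 1 by omega]
    · rw [map_cons, card_cons, card_cons, Nat.add_sub_add_right, cons_add, ih,
        Nat.sub_add_cancel hp]

/-- For the parts of a partition `λ` this is `Σ_j (λ'_j)²`, `λ'` the conjugate partition. -/
def minPairSum (s : Multiset ℕ) : ℕ := (s.map fun p => (s.map (min p)).sum).sum

lemma minPairSum_map_succ_add_replicate_one (s : Multiset ℕ) (c : ℕ) :
    minPairSum (s.map (· + 1) + replicate c 1) = minPairSum s + (card s + c) ^ 2 := by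
  have inner : ∀ p, ((s.map (· + 1) + replicate c 1).map (min (p + 1))).sum =
      (s.map (min p)).sum + (card s + c) := by
    intro p
    simp only [map_add, map_map, Function.comp_apply, Nat.add_min_add_right, map_replicate,
      le_add_iff_nonneg_left, _root_.zero_le, inf_of_le_right, sum_add, sum_map_add, map_const',
      sum_replicate, smul_eq_mul, mul_one]
    ring
  rw [minPairSum, map_add, sum_add, map_map, map_replicate, sum_replicate]
  simp only [Function.comp_def, inner, sum_map_add, minPairSum]
  simp only [map_const', sum_replicate, smul_eq_mul, _root_.zero_le, inf_of_le_left]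
  ring

lemma minPairSum_addColumn (h : card s ≤ b) :
    minPairSum (addColumn b s) = minPairSum s + b ^ 2 := by
  rw [addColumn, minPairSum_map_succ_add_replicate_one, Nat.add_sub_cancel' h]

end Multiset

open Multiset

namespace Nat.Partition

lemma toFinset_parts_subset_range {n : ℕ} (lam : n.Partition) :
    lam.parts.toFinset ⊆ Finset.range (n + 1) := fun _ hi =>
  Finset.mem_range.mpr (Nat.lt_succ_of_le (le_of_mem_parts (Multiset.mem_toFinset.mp hi)))

lemma card_parts_mem_Icc {n : ℕ} (hn : 1 ≤ n) (lam : n.Partition) :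
    lam.parts.card ∈ Finset.Icc 1 n := by
  have hle : lam.parts.card • 1 ≤ lam.parts.sum :=
    Multiset.card_nsmul_le_sum fun _ => lam.parts_pos
  have hne : lam.parts ≠ 0 := by
    rintro h
    have := lam.parts_sum
    rw [h, Multiset.sum_zero] at this
    omega
  rw [lam.parts_sum, smul_eq_mul, mul_one] at hle
  exact Finset.mem_Icc.mpr ⟨Multiset.card_pos.mpr hne, hle⟩

def firstColumnEquiv {n b : ℕ} (hb : b ≤ n) :
    {lam : n.Partition // lam.parts.card = b} ≃
      {rho : (n - b).Partition // rho.parts.card ≤ b} where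
  toFun lam :=
    ⟨⟨lam.1.parts.dropColumn, pos_of_mem_dropColumn, by
      have := sum_dropColumn fun _ => lam.1.parts_pos
      rw [lam.1.parts_sum, lam.2] at this
      omega⟩, lam.2 ▸ card_dropColumn_le⟩
  invFun rho :=
    ⟨⟨rho.1.parts.addColumn b, pos_of_mem_addColumn, by
      rw [sum_addColumn rho.2, rho.1.parts_sum]
      omega⟩, card_addColumn rho.2⟩
  left_inv lam := Subtype.ext <| Partition.ext <| by
    simpa [← lam.2] using addColumn_dropColumn fun _ => lam.1.parts_pos
  right_inv rho := Subtype.ext <| Partition.ext <| dropColumn_addColumn fun _ => rho.1.parts_pos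

end Nat.Partition

section StongWeight

variable {K : Type*} [Field K] (x t : K)

def stongWeight (s : Multiset ℕ) : K :=
  x ^ minPairSum s * ∏ i ∈ s.toFinset, (qPochhammer t (s.count i))⁻¹

def lengthSum (G : ℕ → K) (n : ℕ) : K :=
  ∑ lam : n.Partition, G lam.parts.card * stongWeight x t lam.parts

/-- Adding a first column of height `b` to a partition with `c ≤ b` parts creates `b - c` parts
equal to `1`, which divide the weight by `(t;t)_{b-c}`. -/
def columnFactor (b c : ℕ) : K := if c ≤ b then (qPochhammer t (b - c))⁻¹ else 0

variable {x t} in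
lemma stongWeight_addColumn {b : ℕ} {s : Multiset ℕ} (hs : ∀ p ∈ s, 0 < p) (h : card s ≤ b) :
    stongWeight x t (addColumn b s) =
      x ^ b ^ 2 * (qPochhammer t (b - card s))⁻¹ * stongWeight x t s := by
  have h₁ : (1 : ℕ) ∉ s.toFinset.map ⟨(· + 1), add_left_injective 1⟩ := by
    simp only [Finset.mem_map, Multiset.mem_toFinset, Function.Embedding.coeFn_mk, not_exists,
      not_and]
    intro p hp hp1
    have := hs p hp
    omega
  rw [stongWeight, stongWeight, minPairSum_addColumn h,
    ← prod_count_of_toFinset_subset toFinset_addColumn_subset (fun m => (qPochhammer t m)⁻¹)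
      (by simp),
    prod_insert h₁, prod_map, count_one_addColumn hs]
  simp only [Function.Embedding.coeFn_mk]
  rw [prod_congr rfl fun i hi => by
    rw [count_succ_addColumn (hs i (Multiset.mem_toFinset.mp hi)).ne']]
  ring

lemma lengthSum_zero (G : ℕ → K) : lengthSum x t G 0 = G 0 := by
  simp [lengthSum, stongWeight, minPairSum]

lemma sum_stongWeight_card_eq {n b : ℕ} (hb : b ≤ n) :
    ∑ lam : n.Partition with lam.parts.card = b, stongWeight x t lam.parts =
      x ^ b ^ 2 * lengthSum x t (columnFactor t b) (n - b) := by
  calc ∑ lam : n.Partition with lam.parts.card = b, stongWeight x t lam.parts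
      = ∑ lam : {lam : n.Partition // lam.parts.card = b}, stongWeight x t lam.1.parts :=
        sum_subtype _ (fun _ => by simp) _
    _ = ∑ rho : {rho : (n - b).Partition // rho.parts.card ≤ b},
          x ^ b ^ 2 * ((qPochhammer t (b - rho.1.parts.card))⁻¹ * stongWeight x t rho.1.parts) := by
        rw [← (Nat.Partition.firstColumnEquiv hb).symm.sum_comp]
        refine sum_congr rfl fun rho _ => ?_
        rw [← mul_assoc]
        exact stongWeight_addColumn (fun _ => rho.1.parts_pos) rho.2
    _ = x ^ b ^ 2 * ∑ rho : (n - b).Partition with rho.parts.card ≤ b,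
          (qPochhammer t (b - rho.parts.card))⁻¹ * stongWeight x t rho.parts := by
        rw [mul_sum, sum_subtype _ (p := fun rho : (n - b).Partition => rho.parts.card ≤ b)
          fun _ => by simp]
    _ = x ^ b ^ 2 * lengthSum x t (columnFactor t b) (n - b) := by
        simp only [lengthSum, columnFactor, ite_mul, zero_mul, sum_ite, sum_const_zero, add_zero]

theorem lengthSum_eq_sum_firstColumn {n : ℕ} (hn : 1 ≤ n) (G : ℕ → K) :
    lengthSum x t G n =
      ∑ b ∈ Icc 1 n, G b * (x ^ b ^ 2 * lengthSum x t (columnFactor t b) (n - b)) := by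
  rw [lengthSum, ← sum_fiberwise_of_maps_to fun lam _ => Nat.Partition.card_parts_mem_Icc hn lam]
  refine sum_congr rfl fun b hb => ?_
  rw [← sum_stongWeight_card_eq x t (mem_Icc.mp hb).2, mul_sum]
  exact sum_congr rfl fun lam hlam => by rw [(mem_filter.mp hlam).2]

end StongWeight

section ClosedForm

variable {K : Type*} [Field K] {x t : K}

lemma columnFactor_mul_inv_qPochhammer (ht : ∀ k, qPochhammer t k ≠ 0) (a b : ℕ) :
    columnFactor t a b * (qPochhammer t b)⁻¹ = qBinomial t a b * (qPochhammer t a)⁻¹ := by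
  rw [columnFactor]
  split_ifs with hba
  · have := ht b
    have := ht (a - b)
    rw [eq_mul_inv_iff_mul_eq₀ (ht a), ← qBinomial_mul_qPochhammer_mul_qPochhammer t hba]
    field_simp
  · rw [qBinomial_eq_zero_of_lt t (by omega), zero_mul, zero_mul]

lemma pow_sq_mul_pow_sub (htx : t ^ 2 = x ^ 2) {b n : ℕ} (hb : b ≤ n) :
    x ^ b ^ 2 * x ^ (n - b) = x ^ n * t ^ (b * (b - 1)) := by
  obtain ⟨k, hk⟩ := Nat.even_mul_pred_self b
  have hpow : t ^ (b * (b - 1)) = x ^ (b * (b - 1)) := by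
    rw [hk, ← two_mul, pow_mul, pow_mul, htx]
  rw [hpow, ← pow_add, ← pow_add]
  congr 1
  obtain ⟨d, rfl⟩ := Nat.exists_eq_add_of_le hb
  rcases b with _ | b
  · simp
  · rw [Nat.add_sub_cancel_left, Nat.add_sub_cancel]
    ring

variable (htx : t ^ 2 = x ^ 2) (ht : ∀ k, qPochhammer t k ≠ 0)
include htx ht

theorem lengthSum_columnFactor (a n : ℕ) :
    lengthSum x t (columnFactor t a) n =
      x ^ n * (qPochhammer t a)⁻¹ * qBinomial t (a + n - 1) n := by
  induction n using Nat.strong_induction_on generalizing a with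
  | _ n ih =>
  rcases Nat.eq_zero_or_pos n with rfl | hn
  · simp [lengthSum_zero, columnFactor]
  rw [lengthSum_eq_sum_firstColumn x t hn, show a + n - 1 = a + (n - 1) by omega,
    ← qVandermonde, qVandermondeSum_pred_self _ hn, mul_sum]
  refine sum_congr rfl fun b hb => ?_
  obtain ⟨hb1, hbn⟩ := mem_Icc.mp hb
  rw [ih (n - b) (by omega), show b + (n - b) - 1 = n - 1 by omega]
  calc columnFactor t a b * (x ^ b ^ 2 * (x ^ (n - b) * (qPochhammer t b)⁻¹ *
        qBinomial t (n - 1) (n - b)))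
      = columnFactor t a b * (qPochhammer t b)⁻¹ * (x ^ b ^ 2 * x ^ (n - b)) *
          qBinomial t (n - 1) (n - b) := by ring
    _ = _ := by
      rw [columnFactor_mul_inv_qPochhammer ht, pow_sq_mul_pow_sub htx hbn]
      ring

theorem sum_stongWeight (n : ℕ) :
    ∑ lam : n.Partition, stongWeight x t lam.parts = x ^ n * (qPochhammer t n)⁻¹ := by
  have h : ∑ lam : n.Partition, stongWeight x t lam.parts = lengthSum x t 1 n := by
    simp [lengthSum]
  rcases Nat.eq_zero_or_pos n with rfl | hn
  · rw [h, lengthSum_zero]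
    simp
  rw [h, lengthSum_eq_sum_firstColumn x t hn, ← qVandermonde_inv ht (n - 1) n,
    qVandermondeSum_pred_self _ hn, mul_sum]
  refine sum_congr rfl fun b hb => ?_
  have hbn := (mem_Icc.mp hb).2
  rw [lengthSum_columnFactor htx ht, show b + (n - b) - 1 = n - 1 by omega, Pi.one_apply,
    one_mul, ← mul_assoc, ← mul_assoc, pow_sq_mul_pow_sub htx hbn]
  ring

end ClosedForm

lemma pow_mul_prod_pow_sub_neg_one_pow {q : ℝ} (hq : q ≠ 0) (m : ℕ) :
    q ^ (m * (m - 1) / 2) * ∏ k ∈ Icc 1 m, (q ^ k - (-1 : ℝ) ^ k) =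
      q ^ m ^ 2 * qPochhammer (-q⁻¹) m := by
  induction m with
  | zero => simp
  | succ m ih =>
    rw [show (m + 1) * (m + 1 - 1) / 2 = m * (m - 1) / 2 + m by
        rw [← Nat.choose_two_right, ← Nat.choose_two_right, Nat.choose_succ_succ,
          Nat.choose_one_right, add_comm],
      prod_Icc_succ_top (by omega), qPochhammer_succ, pow_add, ← mul_assoc,
      mul_right_comm _ (q ^ m), ih, neg_pow q⁻¹, inv_pow]
    field_simp
    ring

lemma sum_min_mul_mul_eq (R : Finset ℕ) (c : ℕ → ℕ) (hc : c 0 = 0) :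
    ∑ i ∈ R, ∑ j ∈ R, min i j * (c i * c j) =
      2 * ∑ i ∈ R, ∑ j ∈ R, (if i < j then i * c i * c j else 0) +
        ∑ i ∈ R, (i - 1) * c i ^ 2 + ∑ i ∈ R, c i ^ 2 := by
  have split : ∀ i j, min i j * (c i * c j) = (if i < j then i * c i * c j else 0) +
      (if j < i then j * c j * c i else 0) +
        (if i = j then (i - 1) * c i ^ 2 + c i ^ 2 else 0) := by
    intro i j
    rcases lt_trichotomy i j with h | rfl | h
    · simp only [min_eq_left h.le, h, ↓reduceIte, h.not_gt, add_zero, h.ne]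
      ring
    · rcases i with _ | i
      · simp [hc]
      · simp only [min_self, lt_self_iff_false, ↓reduceIte, add_zero, add_tsub_cancel_right]
        ring
    · simp only [min_eq_right h.le, h.not_gt, ↓reduceIte, h, zero_add, h.ne', add_zero]
      ring
  simp only [split, sum_add_distrib, sum_ite_eq, sum_ite_mem, inter_self, two_mul]
  rw [sum_comm (f := fun i j => if j < i then j * c j * c i else 0)]
  ring

lemma kPart_add_sum_count_sq {n : ℕ} (lam : n.Partition) :
    kPart lam + ∑ i ∈ range (n + 1), lam.parts.count i ^ 2 = minPairSum lam.parts := by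
  have hc : lam.parts.count 0 = 0 := count_eq_zero.mpr fun h => (lam.parts_pos h).ne' rfl
  rw [kPart, ← sum_min_mul_mul_eq _ _ hc, minPairSum,
    sum_map_eq_sum_count lam.toFinset_parts_subset_range]
  refine sum_congr rfl fun i _ => ?_
  rw [sum_map_eq_sum_count lam.toFinset_parts_subset_range, mul_sum]
  exact sum_congr rfl fun j _ => by ring

lemma CU_eq {q : ℝ} (hq : q ≠ 0) {n : ℕ} (lam : n.Partition) :
    CU lam q = q ^ minPairSum lam.parts *
      ∏ i ∈ lam.parts.toFinset, qPochhammer (-q⁻¹) (lam.parts.count i) := by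
  rw [CU, prod_congr rfl fun i _ => pow_mul_prod_pow_sub_neg_one_pow hq _, prod_mul_distrib,
    prod_pow_eq_pow_sum, ← mul_assoc, ← pow_add, kPart_add_sum_count_sq,
    prod_count_of_toFinset_subset lam.toFinset_parts_subset_range _ (qPochhammer_zero _)]

lemma one_div_CU {q : ℝ} (hq : q ≠ 0) {n : ℕ} (lam : n.Partition) :
    1 / CU lam q = stongWeight q⁻¹ (-q⁻¹) lam.parts := by
  rw [CU_eq hq, stongWeight, one_div, mul_inv, inv_pow, prod_inv_distrib]

theorem statement13_general (n : ℕ) (q : ℝ) (hq : 1 < q) :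
    ∑ lam : n.Partition, 1 / CU lam q =
      1 / (q ^ n * ∏ k ∈ Finset.Icc 1 n, (1 - (-1 : ℝ) ^ k * q⁻¹ ^ k)) := by
  have hq₀ : q ≠ 0 := by positivity
  have ht : |-q⁻¹| ≠ 1 := by
    rw [abs_neg, abs_inv, abs_of_pos (by positivity)]
    exact (inv_lt_one_of_one_lt₀ hq).ne
  simp_rw [one_div_CU hq₀]
  rw [sum_stongWeight (by ring) (qPochhammer_ne_zero ht), one_div, mul_inv, inv_pow]
  congr 2
  exact prod_congr rfl fun k _ => by rw [← neg_one_mul, mul_pow]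

/-- Lemma 2.8(2) (unitary Stong's formula): for `n ≥ 1` and real `q > 1`,
`Σ_{λ ⊢ n} 1/C_{U,λ}(q) = 1/(q^n (1 + q⁻¹)(1 - q⁻²) ⋯ (1 - (-1)ⁿ q⁻ⁿ))`, i.e. the
denominator is `q^n ∏_{k=1}^{n} (1 - (-1)^k q^{-k})`. -/
theorem statement13 (n : ℕ) (hn : 1 ≤ n) (q : ℝ) (hq : 1 < q) :
    ∑ lam : n.Partition, 1 / CU lam q =
      1 / (q ^ n * ∏ k ∈ Finset.Icc 1 n, (1 - (-1 : ℝ) ^ k * q⁻¹ ^ k)) :=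
  statement13_general n q hq
end

section
/- For all integers a ≥ 0 and s ≥ 1, the integer s divides Σ_{r} μ(r)·(−1)^{s/r}·binom(s/r + a/r − 1, a/r), where the sum is over all positive integers r dividing both s and a (every positive integer is considered to divide 0, so for a = 0 the sum is over all positive divisors r of s and each binomial coefficient equals 1). Equivalently, F(a,s) := (1/s)·Σ_{r ∣ s, r ∣ a} μ(r)·(−1)^{s/r}·binom(s/r + a/r − 1, a/r) is an integer for all a ≥ 0 and s ≥ 1. -/
/-!
For every `f ∈ ℤ[X]` and `n ≥ 1` one has the Gauss congruence
`n ∣ ∑_{r ∣ gcd(n, k)} μ(r) [X^{k/r}] f^{n/r}`. Taking `f = X - 1`, `n = s + a`, `k = a`, the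
identity `m C(m - 1, b) = (m - b) C(m, b)` shows that this sum is `(s + a)/s` times the sum in
the theorem, so `s` divides the latter.

The Gauss congruence is checked one prime `p ∣ n` at a time. Pairing each divisor `r` prime to `p`
with `p r` reduces it to `p^{v_p(n)} ∣ f^{p q} - f(X^p)^q` where `v_p(q) = v_p(n) - 1`, and this
follows by lifting the exponent from the Frobenius congruence `f^p ≡ f(X^p) (mod p)`.
-/

open Polynomial Finset

open scoped ArithmeticFunction.Moebius

theorem Nat.filter_dvd_divisors_eq_divisors_gcd {n k : ℕ} (hn : n ≠ 0) :
    {r ∈ n.divisors | r ∣ k} = (n.gcd k).divisors := by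
  ext r
  simp [Nat.dvd_gcd_iff, hn]

theorem Nat.add_mul_choose_add_sub_one {u : ℕ} (hu : u ≠ 0) (b : ℕ) :
    (u + b) * (u + b - 1).choose b = u * (u + b).choose b := by
  have h := Nat.choose_mul_succ_eq (u + b - 1) b
  rw [Nat.sub_add_cancel (by omega), Nat.add_sub_cancel] at h
  rw [mul_comm, h, mul_comm]

theorem pow_factorization_add_one_dvd_pow_sub_pow {R : Type*} [CommRing R] {p : ℕ} {a b : R}
    (h : (p : R) ∣ a - b) (q : ℕ) : (p : R) ^ (q.factorization p + 1) ∣ a ^ q - b ^ q := by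
  conv_rhs => rw [← Nat.ordProj_mul_ordCompl_eq_self q p, pow_mul, pow_mul]
  exact (dvd_sub_pow_of_dvd_sub h _).trans (sub_dvd_pow_sub_pow _ _ _)

namespace ArithmeticFunction

theorem moebius_prime_mul {p r : ℕ} (hp : p.Prime) (hpr : ¬p ∣ r) : μ (p * r) = -μ r := by
  rw [isMultiplicative_moebius.map_mul_of_coprime (hp.coprime_iff_not_dvd.mpr hpr),
    moebius_apply_prime hp, neg_one_mul]

theorem sum_divisors_moebius_mul_eq_sum_not_dvd {m p : ℕ} (hp : p.Prime) (hpm : p ∣ m)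
    (g : ℕ → ℤ) :
    ∑ r ∈ m.divisors, μ r * g r =
      ∑ r ∈ m.divisors with ¬p ∣ r, μ r * (g r - g (p * r)) := by
  rw [← sum_filter_add_sum_filter_not m.divisors (fun r => ¬p ∣ r)]
  simp_rw [mul_sub, sum_sub_distrib, sub_eq_add_neg, ← sum_neg_distrib]
  congr 1
  symm
  refine sum_bij_ne_zero (fun r _ _ => p * r) ?_ ?_ ?_ ?_
  · intro r hr _
    simp only [mem_filter, Nat.mem_divisors] at hr ⊢
    exact ⟨⟨(hp.coprime_iff_not_dvd.mpr hr.2).mul_dvd_of_dvd_of_dvd hpm hr.1.1, hr.1.2⟩,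
      not_not_intro (dvd_mul_right p r)⟩
  · intro r₁ _ _ r₂ _ _ h
    exact Nat.eq_of_mul_eq_mul_left hp.pos h
  · intro b hb hgb
    simp only [mem_filter, Nat.mem_divisors, not_not] at hb
    obtain ⟨⟨hbm, hm⟩, c, rfl⟩ := hb
    have hpc : ¬p ∣ c := fun ⟨d, hd⟩ =>
      hp.one_lt.ne' (Nat.isUnit_iff.mp ((moebius_ne_zero_iff_squarefree.mp
        (left_ne_zero_of_mul hgb)) p ⟨d, by rw [hd, mul_assoc]⟩))
    refine ⟨c, ?_, ?_, rfl⟩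
    · simp only [mem_filter, Nat.mem_divisors]
      exact ⟨⟨(dvd_mul_left c p).trans hbm, hm⟩, hpc⟩
    · rwa [moebius_prime_mul hp hpc, neg_mul] at hgb
  · intro r hr _
    rw [moebius_prime_mul hp (mem_filter.mp hr).2, neg_mul]

end ArithmeticFunction

namespace Polynomial

theorem coeff_X_sub_one_pow {R : Type*} [Ring R] (m j : ℕ) :
    ((X - 1 : R[X]) ^ m).coeff j = (-1) ^ (m - j) * m.choose j := by
  rw [sub_eq_add_neg, ← C_1, ← C_neg, coeff_X_add_C_pow]

theorem natCast_dvd_pow_sub_expand {p : ℕ} (hp : p.Prime) (f : ℤ[X]) :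
    (p : ℤ[X]) ∣ f ^ p - expand ℤ p f := by
  have : Fact p.Prime := ⟨hp⟩
  rw [← map_natCast C, C_dvd_iff_dvd_coeff]
  intro i
  rw [← ZMod.intCast_zmod_eq_zero_iff_dvd, ← eq_intCast (Int.castRingHom _), ← coeff_map,
    Polynomial.map_sub, Polynomial.map_pow, map_expand, ZMod.expand_card, sub_self, coeff_zero]

theorem pow_factorization_dvd_coeff_pow_div_sub_coeff_expand {p n r : ℕ} (hp : p.Prime)
    (hn : n ≠ 0) (hpn : p ∣ n) (hrn : r ∣ n) (hpr : ¬p ∣ r) (f : ℤ[X]) (i : ℕ) :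
    (p : ℤ) ^ n.factorization p ∣
      (f ^ (n / r)).coeff i - (expand ℤ p (f ^ (n / (p * r)))).coeff i := by
  obtain ⟨m, rfl⟩ := hrn
  have hpm : p ∣ m := (hp.coprime_iff_not_dvd.mpr hpr).dvd_of_dvd_mul_left hpn
  obtain ⟨q, rfl⟩ := hpm
  have hr : r ≠ 0 := by rintro rfl; simp at hn
  have hq : q ≠ 0 := by rintro rfl; simp at hn
  have hv : (r * (p * q)).factorization p = q.factorization p + 1 := by
    rw [Nat.factorization_mul hr (mul_ne_zero hp.ne_zero hq), Nat.factorization_mul hp.ne_zero hq]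
    simp [hp.factorization_self, Nat.factorization_eq_zero_of_not_dvd hpr, add_comm]
  have hnr : r * (p * q) / r = p * q := Nat.mul_div_cancel_left _ (Nat.pos_of_ne_zero hr)
  have hnpr : r * (p * q) / (p * r) = q := by
    rw [show r * (p * q) = p * r * q by ring,
      Nat.mul_div_cancel_left _ (Nat.pos_of_ne_zero (mul_ne_zero hp.ne_zero hr))]
  have key := pow_factorization_add_one_dvd_pow_sub_pow (natCast_dvd_pow_sub_expand hp f) q
  rw [← pow_mul, ← map_pow, ← map_natCast C, ← C_pow, C_dvd_iff_dvd_coeff] at key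
  rw [hv, hnr, hnpr, ← coeff_sub]
  exact key i

theorem pow_factorization_dvd_sum_moebius_mul_coeff_pow (f : ℤ[X]) {n p : ℕ} (hn : n ≠ 0)
    (hp : p.Prime) (hpn : p ∣ n) (k : ℕ) :
    (p : ℤ) ^ n.factorization p ∣
      ∑ r ∈ (n.gcd k).divisors, μ r * (f ^ (n / r)).coeff (k / r) := by
  have hcong : ∀ r ∈ (n.gcd k).divisors, ¬p ∣ r → (p : ℤ) ^ n.factorization p ∣
      (f ^ (n / r)).coeff (k / r) - (expand ℤ p (f ^ (n / (p * r)))).coeff (k / r) :=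
    fun r hr hpr => pow_factorization_dvd_coeff_pow_div_sub_coeff_expand hp hn hpn
      ((Nat.dvd_of_mem_divisors hr).trans (Nat.gcd_dvd_left n k)) hpr f _
  have hdvd_k : ∀ r ∈ (n.gcd k).divisors, r ∣ k :=
    fun r hr => (Nat.dvd_of_mem_divisors hr).trans (Nat.gcd_dvd_right n k)
  by_cases hpk : p ∣ k
  · rw [ArithmeticFunction.sum_divisors_moebius_mul_eq_sum_not_dvd hp (Nat.dvd_gcd hpn hpk)]
    refine dvd_sum fun r hr => dvd_mul_of_dvd_right ?_ _
    rw [mem_filter] at hr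
    have hpkr : p ∣ k / r := Nat.dvd_div_of_mul_dvd <| mul_comm p r ▸
      (hp.coprime_iff_not_dvd.mpr hr.2).mul_dvd_of_dvd_of_dvd hpk (hdvd_k r hr.1)
    have := hcong r hr.1 hr.2
    rwa [coeff_expand hp.pos, if_pos hpkr, Nat.div_div_eq_div_mul, mul_comm r p] at this
  · refine dvd_sum fun r hr => dvd_mul_of_dvd_right ?_ _
    have hpkr : ¬p ∣ k / r := fun h => hpk (h.trans (Nat.div_dvd_of_dvd (hdvd_k r hr)))
    have := hcong r hr fun h => hpk (h.trans (hdvd_k r hr))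
    rwa [coeff_expand hp.pos, if_neg hpkr, sub_zero] at this

theorem natCast_dvd_sum_moebius_mul_coeff_pow (f : ℤ[X]) {n : ℕ} (hn : n ≠ 0) (k : ℕ) :
    (n : ℤ) ∣ ∑ r ∈ (n.gcd k).divisors, μ r * (f ^ (n / r)).coeff (k / r) := by
  rw [Int.natCast_dvd, Nat.dvd_iff_prime_pow_dvd_dvd]
  intro p e hp hpe
  obtain rfl | he := eq_or_ne e 0
  · simp
  have hpn : p ∣ n := (dvd_pow_self p he).trans hpe
  refine (pow_dvd_pow p ((hp.pow_dvd_iff_le_factorization hn).mp hpe)).trans ?_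
  exact Int.natCast_dvd.mp (mod_cast pow_factorization_dvd_sum_moebius_mul_coeff_pow f hn hp hpn k)

end Polynomial

theorem natCast_add_mul_neg_one_pow_mul_choose {s a r : ℕ} (hs : s ≠ 0) (hrs : r ∣ s)
    (hra : r ∣ a) :
    ((s + a : ℕ) : ℤ) * ((-1) ^ (s / r) * ((s / r + a / r - 1).choose (a / r) : ℤ)) =
      s * ((X - 1 : ℤ[X]) ^ ((s + a) / r)).coeff (a / r) := by
  obtain ⟨u, rfl⟩ := hrs
  obtain ⟨b, rfl⟩ := hra
  have hr : 0 < r := Nat.pos_of_ne_zero (left_ne_zero_of_mul hs)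
  have hchoose : ((u : ℤ) + b) * ((u + b - 1).choose b : ℕ) = u * ((u + b).choose b : ℕ) :=
    mod_cast Nat.add_mul_choose_add_sub_one (right_ne_zero_of_mul hs) b
  rw [← mul_add, Nat.mul_div_cancel_left _ hr, Nat.mul_div_cancel_left _ hr,
    Nat.mul_div_cancel_left _ hr, coeff_X_sub_one_pow, Nat.add_sub_cancel]
  push_cast
  linear_combination ((r : ℤ) * (-1) ^ u) * hchoose

/-- Theorem 4.2(1): for all integers `a ≥ 0` and `s ≥ 1`, the integer `s` divides
`Σ_{r ∣ s, r ∣ a} μ(r) (-1)^{s/r} C(s/r + a/r - 1, a/r)`, the sum being over all positive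
integers `r` dividing both `s` and `a` (every positive integer divides `0`). Equivalently,
`F(a,s) = (1/s) Σ_{r ∣ s, r ∣ a} μ(r) (-1)^{s/r} C(s/r + a/r - 1, a/r)` is an integer. -/
theorem statement17 (a s : ℕ) (hs : 1 ≤ s) :
    (s : ℤ) ∣
      ∑ r ∈ s.divisors.filter (fun r => r ∣ a),
        (ArithmeticFunction.moebius r : ℤ) * (-1) ^ (s / r) *
          (Nat.choose (s / r + a / r - 1) (a / r) : ℤ) := by
  have hs0 : s ≠ 0 := Nat.one_le_iff_ne_zero.mp hs
  have hn : s + a ≠ 0 := by omega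
  have hdivisors : s.divisors.filter (· ∣ a) = ((s + a).gcd a).divisors := by
    rw [Nat.gcd_add_self_left, Nat.filter_dvd_divisors_eq_divisors_gcd hs0]
  refine (mul_dvd_mul_iff_left (Int.natCast_ne_zero.mpr hn)).mp ?_
  rw [hdivisors, mul_sum, mul_comm]
  have hterms : ∀ r ∈ ((s + a).gcd a).divisors,
      ((s + a : ℕ) : ℤ) * (μ r * (-1) ^ (s / r) * ((s / r + a / r - 1).choose (a / r) : ℤ)) =
        s * (μ r * ((X - 1 : ℤ[X]) ^ ((s + a) / r)).coeff (a / r)) := by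
    intro r hr
    rw [Nat.gcd_add_self_left, Nat.mem_divisors, Nat.dvd_gcd_iff] at hr
    linear_combination (μ r) * natCast_add_mul_neg_one_pow_mul_choose hs0 hr.1.1 hr.1.2
  rw [sum_congr rfl hterms, ← mul_sum]
  exact mul_dvd_mul_left _ (natCast_dvd_sum_moebius_mul_coeff_pow _ hn a)
end
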